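/- arXiv:1906.11529 — 12 statements merged into one kernel-verified Lean document; each statement's English description precedes it below -/
import Mathlib

section
/- Let c : ℤ → ℝ and write c = c(n), c_1 = c(n+1). For every solution u, v : ℤ × ℝ → ℝ of the semi-discrete system u_{1x} = (u_1+v_1+c_1)u_x/(u+v+c), v_{1x} = 2(v_1-v)u_x/(u+v+c) + 2(c_1-c)(u_x/(u+v+c))·ln(u_x/(u+v+c)) + v_x, satisfying u(n,·)+v(n,·)+c(n) > 0 and u_x(n,·) > 0 for all n, the function I_1 = 2v - v_x(u+v+c)/u_x + 2c·ln(u_x/(u+v+c)) is an n-integral: I_1 evaluated at level n+1 (i.e., 2v_1 - v_{1x}(u_1+v_1+c_1)/u_{1x} + 2c_1·ln(u_{1x}/(u_1+v_1+c_1))) equals I_1 evaluated at level n, for all n and x. -/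
/-- for every solution of the semi-discrete system of Theorem 1.1 (with `c`
depending on `n`), the function `I₁ = 2v - vₓ(u+v+c)/uₓ + 2c·ln(uₓ/(u+v+c))` is an
`n`-integral: its value at level `n+1` equals its value at level `n`. -/
theorem n_integral_I1_of_semidiscrete_system (c : ℤ → ℝ) (u v : ℤ → ℝ → ℝ)
    (hu : ∀ n, ContDiff ℝ (⊤ : ℕ∞) (u n)) (hv : ∀ n, ContDiff ℝ (⊤ : ℕ∞) (v n))
    (hpos : ∀ n x, 0 < u n x + v n x + c n)
    (hux : ∀ n x, 0 < deriv (u n) x)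
    (hsysu : ∀ n x, deriv (u (n + 1)) x =
      (u (n + 1) x + v (n + 1) x + c (n + 1)) * deriv (u n) x / (u n x + v n x + c n))
    (hsysv : ∀ n x, deriv (v (n + 1)) x =
      2 * (v (n + 1) x - v n x) * deriv (u n) x / (u n x + v n x + c n)
        + 2 * (c (n + 1) - c n) * (deriv (u n) x / (u n x + v n x + c n))
            * Real.log (deriv (u n) x / (u n x + v n x + c n))
        + deriv (v n) x) :
    ∀ n x,
      2 * v (n + 1) x
          - deriv (v (n + 1)) x * (u (n + 1) x + v (n + 1) x + c (n + 1)) / deriv (u (n + 1)) x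
          + 2 * c (n + 1) * Real.log (deriv (u (n + 1)) x / (u (n + 1) x + v (n + 1) x + c (n + 1)))
        = 2 * v n x - deriv (v n) x * (u n x + v n x + c n) / deriv (u n) x
          + 2 * c n * Real.log (deriv (u n) x / (u n x + v n x + c n)) := by
  intro n x
  have hA : u n x + v n x + c n ≠ 0 := (hpos n x).ne'
  have hA1 : u (n + 1) x + v (n + 1) x + c (n + 1) ≠ 0 := (hpos (n + 1) x).ne'
  have hp : deriv (u n) x ≠ 0 := (hux n x).ne'
  rw [hsysu n x, hsysv n x]
  have harg : (u (n + 1) x + v (n + 1) x + c (n + 1)) * deriv (u n) x /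
      (u n x + v n x + c n) / (u (n + 1) x + v (n + 1) x + c (n + 1)) =
      deriv (u n) x / (u n x + v n x + c n) := by
    field_simp
  rw [harg]
  field_simp
  ring
end

section
/- Let c : ℤ → ℝ and write c = c(n), c_1 = c(n+1). For every solution u, v : ℤ × ℝ → ℝ of the semi-discrete system u_{1x} = (u_1+v_1+c_1)u_x/(u+v+c), v_{1x} = 2(v_1-v)u_x/(u+v+c) + 2(c_1-c)(u_x/(u+v+c))·ln(u_x/(u+v+c)) + v_x, satisfying u(n,·)+v(n,·)+c(n) > 0 and u_x(n,·) > 0 for all n, the function I_2 = u_{xx}/u_x - (2u_x+v_x)/(u+v+c) is an n-integral: I_2 evaluated at level n+1 (i.e., u_{1xx}/u_{1x} - (2u_{1x}+v_{1x})/(u_1+v_1+c_1)) equals I_2 evaluated at level n, for all n and x. -/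
/-- for every solution of the semi-discrete system of Theorem 1.1 (with `c`
depending on `n`), the function `I₂ = uₓₓ/uₓ - (2uₓ+vₓ)/(u+v+c)` is an `n`-integral:
its value at level `n+1` equals its value at level `n`. -/
theorem n_integral_I2_of_semidiscrete_system (c : ℤ → ℝ) (u v : ℤ → ℝ → ℝ)
    (hu : ∀ n, ContDiff ℝ (⊤ : ℕ∞) (u n)) (hv : ∀ n, ContDiff ℝ (⊤ : ℕ∞) (v n))
    (hpos : ∀ n x, 0 < u n x + v n x + c n)
    (hux : ∀ n x, 0 < deriv (u n) x)
    (hsysu : ∀ n x, deriv (u (n + 1)) x =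
      (u (n + 1) x + v (n + 1) x + c (n + 1)) * deriv (u n) x / (u n x + v n x + c n))
    (hsysv : ∀ n x, deriv (v (n + 1)) x =
      2 * (v (n + 1) x - v n x) * deriv (u n) x / (u n x + v n x + c n)
        + 2 * (c (n + 1) - c n) * (deriv (u n) x / (u n x + v n x + c n))
            * Real.log (deriv (u n) x / (u n x + v n x + c n))
        + deriv (v n) x) :
    ∀ n x,
      deriv (deriv (u (n + 1))) x / deriv (u (n + 1)) x
          - (2 * deriv (u (n + 1)) x + deriv (v (n + 1)) x)
              / (u (n + 1) x + v (n + 1) x + c (n + 1))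
        = deriv (deriv (u n)) x / deriv (u n) x
          - (2 * deriv (u n) x + deriv (v n) x) / (u n x + v n x + c n) := by
  intro n x
  have hwne : u n x + v n x + c n ≠ 0 := ne_of_gt (hpos n x)
  have hWne : u (n+1) x + v (n+1) x + c (n+1) ≠ 0 := ne_of_gt (hpos (n+1) x)
  have hane : deriv (u n) x ≠ 0 := ne_of_gt (hux n x)
  have hui : ∀ m, ContDiff ℝ (((⊤ : ℕ∞) : WithTop ℕ∞)) (u m) := fun m => (hu m).of_le (by simp)
  have hdu : ∀ m, Differentiable ℝ (u m) := fun m => (contDiff_infty_iff_deriv.mp (hui m)).1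
  have hdv : ∀ m, Differentiable ℝ (v m) := fun m =>
    (contDiff_infty_iff_deriv.mp ((hv m).of_le (by simp))).1
  have hdu' : ∀ m, Differentiable ℝ (deriv (u m)) := fun m =>
    (contDiff_infty_iff_deriv.mp (contDiff_infty_iff_deriv.mp (hui m)).2).1
  have hW : HasDerivAt (fun y => u (n+1) y + v (n+1) y + c (n+1))
      (deriv (u (n+1)) x + deriv (v (n+1)) x) x :=
    (((hdu (n+1)) x).hasDerivAt.add ((hdv (n+1)) x).hasDerivAt).add_const _
  have hw : HasDerivAt (fun y => u n y + v n y + c n)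
      (deriv (u n) x + deriv (v n) x) x :=
    (((hdu n) x).hasDerivAt.add ((hdv n) x).hasDerivAt).add_const _
  have ha : HasDerivAt (deriv (u n)) (deriv (deriv (u n)) x) x := ((hdu' n) x).hasDerivAt
  have hF : HasDerivAt
      (fun y => (u (n+1) y + v (n+1) y + c (n+1)) * deriv (u n) y / (u n y + v n y + c n))
      ((((deriv (u (n+1)) x + deriv (v (n+1)) x) * deriv (u n) x
          + (u (n+1) x + v (n+1) x + c (n+1)) * deriv (deriv (u n)) x)
            * (u n x + v n x + c n)
        - (u (n+1) x + v (n+1) x + c (n+1)) * deriv (u n) x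
            * (deriv (u n) x + deriv (v n) x))
        / (u n x + v n x + c n) ^ 2) x :=
    (hW.mul ha).div hw hwne
  have h2 : deriv (deriv (u (n + 1))) x =
      (((deriv (u (n+1)) x + deriv (v (n+1)) x) * deriv (u n) x
          + (u (n+1) x + v (n+1) x + c (n+1)) * deriv (deriv (u n)) x)
            * (u n x + v n x + c n)
        - (u (n+1) x + v (n+1) x + c (n+1)) * deriv (u n) x
            * (deriv (u n) x + deriv (v n) x))
        / (u n x + v n x + c n) ^ 2 := by
    conv_lhs => rw [show deriv (u (n + 1)) =
        (fun y => (u (n+1) y + v (n+1) y + c (n+1)) * deriv (u n) y / (u n y + v n y + c n))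
      from funext (hsysu n)]
    exact hF.deriv
  rw [h2, hsysu n x, hsysv n x]
  field_simp
  ring
end

section
/- Let c : ℤ → ℝ and write c_i = c(n+i), v_i = v(n+i,x). For every solution u, v : ℤ × ℝ → ℝ of the semi-discrete system u_{1x} = (u_1+v_1+c_1)u_x/(u+v+c), v_{1x} = 2(v_1-v)u_x/(u+v+c) + 2(c_1-c)(u_x/(u+v+c))·ln(u_x/(u+v+c)) + v_x, satisfying u(n,·)+v(n,·)+c(n) > 0 and u_x(n,·) > 0 for all n, and on any open x-interval where (c-c_2)(v_3-v) - (c-c_3)(v_2-v) ≠ 0, the function F_1 = [(c-c_1)(v_2-v) - (c-c_2)(v_1-v)] / [(c-c_2)(v_3-v) - (c-c_3)(v_2-v)] is an x-integral: ∂F_1/∂x = 0. -/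
/-- for every solution of the semi-discrete system of Theorem 1.1 (with `c`
depending on `n`), on any open set of the `x`-variable where
`(c-c₂)(v₃-v) - (c-c₃)(v₂-v) ≠ 0`, the function
`F₁ = [(c-c₁)(v₂-v) - (c-c₂)(v₁-v)] / [(c-c₂)(v₃-v) - (c-c₃)(v₂-v)]`
is an `x`-integral: `∂F₁/∂x = 0`. -/
theorem x_integral_F1_of_semidiscrete_system (c : ℤ → ℝ) (u v : ℤ → ℝ → ℝ)
    (hu : ∀ n, ContDiff ℝ (⊤ : ℕ∞) (u n)) (hv : ∀ n, ContDiff ℝ (⊤ : ℕ∞) (v n))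
    (hpos : ∀ n x, 0 < u n x + v n x + c n)
    (hux : ∀ n x, 0 < deriv (u n) x)
    (hsysu : ∀ n x, deriv (u (n + 1)) x =
      (u (n + 1) x + v (n + 1) x + c (n + 1)) * deriv (u n) x / (u n x + v n x + c n))
    (hsysv : ∀ n x, deriv (v (n + 1)) x =
      2 * (v (n + 1) x - v n x) * deriv (u n) x / (u n x + v n x + c n)
        + 2 * (c (n + 1) - c n) * (deriv (u n) x / (u n x + v n x + c n))
            * Real.log (deriv (u n) x / (u n x + v n x + c n))
        + deriv (v n) x)
    (n : ℤ) (s : Set ℝ) (hs : IsOpen s)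
    (hden : ∀ x ∈ s,
      (c n - c (n + 2)) * (v (n + 3) x - v n x)
        - (c n - c (n + 3)) * (v (n + 2) x - v n x) ≠ 0) :
    ∀ x ∈ s,
      deriv (fun t =>
        ((c n - c (n + 1)) * (v (n + 2) t - v n t)
            - (c n - c (n + 2)) * (v (n + 1) t - v n t))
          / ((c n - c (n + 2)) * (v (n + 3) t - v n t)
            - (c n - c (n + 3)) * (v (n + 2) t - v n t))) x = 0 := by
  intro x hx
  have H : ∀ m, HasDerivAt (v m) (deriv (v m) x) x := fun m =>
    (((hv m).differentiable (by simp)).differentiableAt).hasDerivAt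
  have hSne : ∀ m, u m x + v m x + c m ≠ 0 := fun m => (hpos m x).ne'
  set A := deriv (u n) x / (u n x + v n x + c n) with hAdef
  have ha : ∀ m, deriv (u (m + 1)) x / (u (m + 1) x + v (m + 1) x + c (m + 1))
      = deriv (u m) x / (u m x + v m x + c m) := by
    intro m
    rw [hsysu m x, div_div, mul_comm (u m x + v m x + c m),
      mul_div_mul_left _ _ (hSne (m + 1))]
  have e1 : n + 1 + 1 = n + 2 := by ring
  have e2 : n + 2 + 1 = n + 3 := by ring
  have ha1 : deriv (u (n + 1)) x / (u (n + 1) x + v (n + 1) x + c (n + 1)) = A := ha n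
  have ha2 : deriv (u (n + 2)) x / (u (n + 2) x + v (n + 2) x + c (n + 2)) = A := by
    have h := ha (n + 1)
    rw [e1] at h
    rw [h, ha n]
  have h1 := hsysv n x
  rw [mul_div_assoc, ← hAdef] at h1
  have h2 := hsysv (n + 1) x
  rw [e1, mul_div_assoc, ha1] at h2
  have h3 := hsysv (n + 2) x
  rw [e2, mul_div_assoc, ha2] at h3
  have hden' := hden x hx
  have hN : HasDerivAt (fun t =>
      (c n - c (n + 1)) * (v (n + 2) t - v n t)
        - (c n - c (n + 2)) * (v (n + 1) t - v n t))
      ((c n - c (n + 1)) * (deriv (v (n + 2)) x - deriv (v n) x)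
        - (c n - c (n + 2)) * (deriv (v (n + 1)) x - deriv (v n) x)) x :=
    (((H (n + 2)).sub (H n)).const_mul _).sub (((H (n + 1)).sub (H n)).const_mul _)
  have hD : HasDerivAt (fun t =>
      (c n - c (n + 2)) * (v (n + 3) t - v n t)
        - (c n - c (n + 3)) * (v (n + 2) t - v n t))
      ((c n - c (n + 2)) * (deriv (v (n + 3)) x - deriv (v n) x)
        - (c n - c (n + 3)) * (deriv (v (n + 2)) x - deriv (v n) x)) x :=
    (((H (n + 3)).sub (H n)).const_mul _).sub (((H (n + 2)).sub (H n)).const_mul _)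
  rw [(hN.fun_div hD hden').deriv]
  rw [div_eq_zero_iff]
  left
  rw [h3, h2, h1]
  ring
end

section
/- (Classification part of Theorem 1.1.) Let c : ℤ → ℝ satisfy c(n+1) ≠ c(n) for all n ∈ ℤ, and write c = c(n), c_1 = c(n+1). Let f and g be smooth functions of (x, n, u, v, u_1, v_1, u_x, v_x) with f > 0, defined on the domain where u+v+c > 0, u_1+v_1+c_1 > 0 and u_x > 0. Suppose the n-integral identities hold identically in jet variables: with u_{1x} := f, v_{1x} := g and u_{1xx} := f_x + f_u u_x + f_v v_x + f_{u_1} f + f_{v_1} g + f_{u_x} u_{xx} + f_{v_x} v_{xx}, the equalities 2v_1 - g(u_1+v_1+c_1)/f + 2c_1·ln(f/(u_1+v_1+c_1)) = 2v - v_x(u+v+c)/u_x + 2c·ln(u_x/(u+v+c)) and u_{1xx}/f - (2f+g)/(u_1+v_1+c_1) = u_{xx}/u_x - (2u_x+v_x)/(u+v+c) hold for all values of (x, n, u, v, u_1, v_1, u_x, v_x, u_{xx}, v_{xx}) in the domain. Then f = (u_1+v_1+c_1)u_x/(u+v+c) and g = 2(v_1-v)u_x/(u+v+c) + 2(c_1-c)(u_x/(u+v+c))·ln(u_x/(u+v+c))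 + v_x. -/
section Aux

open Filter

lemma aux_const_line {h : ℝ → ℝ} {s : Set ℝ} (hs : Convex ℝ s) (hso : IsOpen s)
    (hd : ∀ t ∈ s, HasDerivAt h 0 t) {x y : ℝ} (hx : x ∈ s) (hy : y ∈ s) : h x = h y := by
  apply hs.is_const_of_fderivWithin_eq_zero (𝕜 := ℝ) (f := h)
    (fun t ht => ((hd t ht).differentiableAt).differentiableWithinAt) _ hx hy
  intro t ht
  rw [fderivWithin_of_isOpen hso ht]
  rw [(hd t ht).hasFDerivAt.fderiv]
  ext
  simp

lemma aux_single_apply (p : Fin 7 → ℝ) (a : ℝ) (i j : Fin 7) :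
    (p + a • (Pi.single i 1 : Fin 7 → ℝ)) j = if j = i then p j + a else p j := by
  by_cases h : j = i <;> simp [h, Pi.single_apply]

lemma aux_line_hasDerivAt {F : (Fin 7 → ℝ) → ℝ} {S : Set (Fin 7 → ℝ)}
    (hF : ∀ p ∈ S, DifferentiableAt ℝ F p) (p0 : Fin 7 → ℝ) (i : Fin 7) (t : ℝ)
    (ht : p0 + t • (Pi.single i 1 : Fin 7 → ℝ) ∈ S) :
    HasDerivAt (fun w : ℝ => F (p0 + w • (Pi.single i 1 : Fin 7 → ℝ)))
      (fderiv ℝ F (p0 + t • (Pi.single i 1 : Fin 7 → ℝ)) (Pi.single i 1)) t := by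
  have hpath : HasDerivAt (fun w : ℝ => p0 + w • (Pi.single i 1 : Fin 7 → ℝ))
      (Pi.single i 1) t := by
    simpa using ((hasDerivAt_id t).smul_const (Pi.single i 1 : Fin 7 → ℝ)).const_add p0
  exact ((hF _ ht).hasFDerivAt.comp_hasDerivAt t hpath)

lemma aux_eventually_mem {S : Set (Fin 7 → ℝ)} (hS : IsOpen S) (p0 : Fin 7 → ℝ) (i : Fin 7)
    (ht : p0 ∈ S) : ∀ᶠ w in nhds (0:ℝ), p0 + w • (Pi.single i 1 : Fin 7 → ℝ) ∈ S := by
  have hc : ContinuousAt (fun w : ℝ => p0 + w • (Pi.single i 1 : Fin 7 → ℝ)) 0 := by fun_prop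
  have := hc.eventually_mem (hS.mem_nhds (by simpa using ht))
  simpa using this

end Aux

def jp (x u v u1 v1 ux vx : ℝ) : Fin 7 → ℝ := ![x, u, v, u1, v1, ux, vx]

@[simp] lemma jp0 (x u v u1 v1 ux vx : ℝ) : jp x u v u1 v1 ux vx 0 = x := rfl
@[simp] lemma jp1 (x u v u1 v1 ux vx : ℝ) : jp x u v u1 v1 ux vx 1 = u := rfl
@[simp] lemma jp2 (x u v u1 v1 ux vx : ℝ) : jp x u v u1 v1 ux vx 2 = v := rfl
@[simp] lemma jp3 (x u v u1 v1 ux vx : ℝ) : jp x u v u1 v1 ux vx 3 = u1 := rfl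
@[simp] lemma jp4 (x u v u1 v1 ux vx : ℝ) : jp x u v u1 v1 ux vx 4 = v1 := rfl
@[simp] lemma jp5 (x u v u1 v1 ux vx : ℝ) : jp x u v u1 v1 ux vx 5 = ux := rfl
@[simp] lemma jp6 (x u v u1 v1 ux vx : ℝ) : jp x u v u1 v1 ux vx 6 = vx := rfl

lemma jp_add0 (x u v u1 v1 ux vx a : ℝ) :
    jp x u v u1 v1 ux vx + a • (Pi.single 0 1 : Fin 7 → ℝ) = jp (x+a) u v u1 v1 ux vx := by
  funext j; fin_cases j <;> simp [aux_single_apply]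
lemma jp_add1 (x u v u1 v1 ux vx a : ℝ) :
    jp x u v u1 v1 ux vx + a • (Pi.single 1 1 : Fin 7 → ℝ) = jp x (u+a) v u1 v1 ux vx := by
  funext j; fin_cases j <;> simp [aux_single_apply]
lemma jp_add2 (x u v u1 v1 ux vx a : ℝ) :
    jp x u v u1 v1 ux vx + a • (Pi.single 2 1 : Fin 7 → ℝ) = jp x u (v+a) u1 v1 ux vx := by
  funext j; fin_cases j <;> simp [aux_single_apply]
lemma jp_add3 (x u v u1 v1 ux vx a : ℝ) :
    jp x u v u1 v1 ux vx + a • (Pi.single 3 1 : Fin 7 → ℝ) = jp x u v (u1+a) v1 ux vx := by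
  funext j; fin_cases j <;> simp [aux_single_apply]
lemma jp_add4 (x u v u1 v1 ux vx a : ℝ) :
    jp x u v u1 v1 ux vx + a • (Pi.single 4 1 : Fin 7 → ℝ) = jp x u v u1 (v1+a) ux vx := by
  funext j; fin_cases j <;> simp [aux_single_apply]
lemma jp_add5 (x u v u1 v1 ux vx a : ℝ) :
    jp x u v u1 v1 ux vx + a • (Pi.single 5 1 : Fin 7 → ℝ) = jp x u v u1 v1 (ux+a) vx := by
  funext j; fin_cases j <;> simp [aux_single_apply]
lemma jp_add6 (x u v u1 v1 ux vx a : ℝ) :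
    jp x u v u1 v1 ux vx + a • (Pi.single 6 1 : Fin 7 → ℝ) = jp x u v u1 v1 ux (vx+a) := by
  funext j; fin_cases j <;> simp [aux_single_apply]

lemma jp_eta (p : Fin 7 → ℝ) : p = jp (p 0) (p 1) (p 2) (p 3) (p 4) (p 5) (p 6) := by
  funext j; fin_cases j <;> rfl


lemma stage4_algebra (cn c1 A B φ K a0 a1 a2 a3 a4 : ℝ)
    (hA : 0 < A) (hB : 0 < B) (hφ : 0 < φ) (hm : c1 - cn ≠ 0)
    (hP : ∀ t L s : ℝ, 0 < t → Real.log t = L →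
      A*B^2*t*(a0 + a1*t + a2*s + a3*t*φ)
        + A*B*t*a4*(t*φ*(K + 2*(c1-cn)*L) + s*φ*A) + (2*t+s)*t*φ*B^2
      = t*φ*A*(2*t*φ*B + (t*φ*(K + 2*(c1-cn)*L) + s*φ*A))) :
    a2*A = -φ ∧ a4*B = φ ∧ (a1 + a3*φ)*(A*B) = 2*φ^2*A - 2*φ*B := by
  have hAne := ne_of_gt hA
  have hBne := ne_of_gt hB
  have hφne := ne_of_gt hφ
  set E := Real.exp 1 with hEdef
  have hE : 1 < E := by
    have := Real.exp_one_gt_d9; rw [hEdef]; norm_num at this ⊢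
  have hEpos : (0:ℝ) < E := lt_trans one_pos hE
  have hP1 := hP 1 0 0 one_pos Real.log_one
  have hS1 := hP 1 0 1 one_pos Real.log_one
  have hP3 := hP E 1 0 hEpos (Real.log_exp 1)
  have hP4 := hP (E*E) 2 0 (by positivity)
    (by rw [Real.log_mul (ne_of_gt hEpos) (ne_of_gt hEpos), Real.log_exp]; norm_num)
  have hβz : (A*B^2*(a1+a3*φ) + A*B*a4*φ*K + 2*φ*B^2 - 2*φ^2*A*B - φ^2*A*K)
      * (E^2*(E-1)^2) = 0 := by
    linear_combination (-(1:ℝ))*hP4 + 2*E^2*hP3 - (2*E^3-E^2)*hP1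
  have hEne : E^2*(E-1)^2 ≠ 0 := by
    have : (0:ℝ) < E - 1 := by linarith
    positivity
  have hβ : A*B^2*(a1+a3*φ) + A*B*a4*φ*K + 2*φ*B^2 - 2*φ^2*A*B - φ^2*A*K = 0 :=
    (mul_eq_zero.mp hβz).resolve_right hEne
  have hγz : (2*(c1-cn)*(A*B*a4*φ - φ^2*A)) * E^2 = 0 := by
    linear_combination hP3 - E*hP1 - (E^2-E)*hβ
  have hγ : A*B*a4*φ - φ^2*A = 0 := by
    have h1 := (mul_eq_zero.mp hγz).resolve_right (by positivity)
    have h2 : (2:ℝ)*(c1-cn) ≠ 0 := by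
      intro hco; exact hm (by linarith)
    exact (mul_eq_zero.mp h1).resolve_left h2
  have hd4 : a4*B = φ := by
    have h1 : A*φ*(a4*B - φ) = 0 := by linear_combination hγ
    have h2 : a4*B - φ = 0 := (mul_eq_zero.mp h1).resolve_left (by
      exact mul_ne_zero hAne hφne)
    linarith
  refine ⟨?_, hd4, ?_⟩
  · have h1 : (a2*A + φ)*(A*B^2) = 0 := by
      linear_combination A*hS1 - A*hP1 - A^3*φ*hd4
    have h2 : a2*A + φ = 0 := (mul_eq_zero.mp h1).resolve_right (by positivity)
    linarith
  · have h1 : ((a1 + a3*φ)*(A*B) - (2*φ^2*A - 2*φ*B))*B = 0 := by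
      linear_combination hβ - A*φ*K*hd4
    have h2 := (mul_eq_zero.mp h1).resolve_right hBne
    linarith


lemma stage4_gval (A B φ t s G LA LB Lφ Lt v v1 cn c1 : ℝ)
    (hA : A ≠ 0) (hB : B ≠ 0) (hφ : φ ≠ 0) (ht : t ≠ 0)
    (h : 2*v1 - G*B/(t*φ) + 2*c1*(Lt + Lφ - LB) = 2*v - s*A/t + 2*cn*(Lt - LA)) :
    G*B = t*φ*((2*(v1-v) + 2*cn*LA + 2*c1*(Lφ-LB)) + 2*(c1-cn)*Lt) + s*φ*A := by
  have key : G*B/(t*φ)*(t*φ) = G*B := div_mul_cancel₀ _ (mul_ne_zero ht hφ)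
  have key2 : s*A/t*t = s*A := div_mul_cancel₀ _ ht
  linear_combination (-(t*φ))*h - key + φ*key2

lemma stage4_master (A B φ t s G W a0 a1 a2 a3 a4 d5 d6 : ℝ)
    (hA : A ≠ 0) (hB : B ≠ 0) (hφ : φ ≠ 0) (ht : t ≠ 0)
    (hG : G*B = W)
    (h : (t*a0 + t*a1*t + t*a2*s + t*a3*(t*φ) + t*a4*G + d5*0 + d6*0)/(t*φ)
          - (2*(t*φ)+G)/B = 0/t - (2*t+s)/A) :
    A*B^2*t*(a0+a1*t+a2*s+a3*t*φ) + A*B*t*a4*W + (2*t+s)*t*φ*B^2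
      = t*φ*A*(2*t*φ*B + W) := by
  have key1 : (t*a0 + t*a1*t + t*a2*s + t*a3*(t*φ) + t*a4*G + d5*0 + d6*0)/(t*φ)*(t*φ)
      = t*a0 + t*a1*t + t*a2*s + t*a3*(t*φ) + t*a4*G + d5*0 + d6*0 :=
    div_mul_cancel₀ _ (mul_ne_zero ht hφ)
  have key2 : (2*(t*φ)+G)/B*B = 2*(t*φ)+G := div_mul_cancel₀ _ hB
  have key4 : (2*t+s)/A*A = 2*t+s := div_mul_cancel₀ _ hA
  linear_combination (t*φ*A*B^2)*h - A*B^2*key1 + t*φ*A*B*key2 - t*φ*B^2*key4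
    - A*B*t*a4*hG + t*φ*A*hG


lemma stage6 (A B P d1 d3 F1 F2 b1 b3 e1 e3 : ℝ)
    (hA : 0 < A) (hB : 0 < B) (hP : 0 < P)
    (hF1 : F1*(A+1) = P*A)
    (hT1 : b1*(A+1) + F1 = d1*A + P)
    (hT2 : b3*(A+1) = d3*A)
    (hF2 : F2*B = P*(B+1))
    (hT3 : e1*B = d1*(B+1))
    (hT4 : e3*B + F2 = d3*(B+1) + P)
    (hI : (d1 + d3*P)*(A*B) = 2*P^2*A - 2*P*B)
    (hII : (b1 + b3*F1)*((A+1)*B) = 2*F1^2*(A+1) - 2*F1*B)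
    (hIII : (e1 + e3*F2)*(A*(B+1)) = 2*F2^2*A - 2*F2*(B+1)) :
    P*A = B := by
  have hA1 : (0:ℝ) < A + 1 := by linarith
  have hB1 : (0:ℝ) < B + 1 := by linarith
  have hg1 : (d1*(A*(A+1)*B) + d3*(P*A^2*B) + P*(A+1)*B + P*A*B - 2*P^2*A^2)*(A+1)
      = 0 := by
    linear_combination (A+1)^2*hII - (A+1)^2*B*hT1 - F1*(A+1)^2*B*hT2
      + (2*(A+1)*(F1*(A+1)+P*A) - (A+1)*B - d3*A*(A+1)*B)*hF1
  have hIIp : d1*(A*(A+1)*B) + d3*(P*A^2*B) + P*(A+1)*B + P*A*B - 2*P^2*A^2 = 0 :=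
    (mul_eq_zero.mp hg1).resolve_right (ne_of_gt hA1)
  have hd1 : (d1*A + P)*B = 0 := by linear_combination hIIp - A*hI
  have hg2 : (d1*(A*B^2) + d3*(P*A*B*(B+1)) + P^2*A*B - P^2*A*(B+1) - 2*P^2*A*B
      + 2*P*B^2)*((B+1)^2) = 0 := by
    linear_combination B^3*hIII - A*B^2*(B+1)*hT3 - A*B*(B+1)*F2*B*hT4
      + (-2*B^2 - 2*B^3 + A*P + A*B*F2 - A*B*d3 + 3*A*B*P + 3*A*B^2*F2
        - 2*A*B^2*d3 + 2*A*B^2*P - A*B^3*d3)*hF2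
  have hIIIp : d1*(A*B^2) + d3*(P*A*B*(B+1)) + P^2*A*B - P^2*A*(B+1) - 2*P^2*A*B
      + 2*P*B^2 = 0 :=
    (mul_eq_zero.mp hg2).resolve_right (by positivity)
  have hd3 : d3*(P*A*B) - 2*P^2*A + P*B = 0 := by linear_combination hI - hd1
  have hfin : P*(P*A - B) = 0 := by linear_combination hIIIp - B*hd1 - (B+1)*hd3
  have := (mul_eq_zero.mp hfin).resolve_left (ne_of_gt hP)
  linarith

lemma final_g (A B gv p2 p4 p5 p6 cn c1 L : ℝ) (hA : 0 < A) (hB : 0 < B) (hp5 : 0 < p5)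
    (h : 2*p4 - gv*B/(B*p5/A) + 2*c1*L = 2*p2 - p6*A/p5 + 2*cn*L) :
    gv = 2*(p4-p2)*p5/A + 2*(c1-cn)*(p5/A)*L + p6 := by
  have hAne := ne_of_gt hA
  have hBne := ne_of_gt hB
  have hp5ne := ne_of_gt hp5
  have key : gv*B/(B*p5/A) = gv*A/p5 := by
    rw [div_div_eq_mul_div, div_eq_div_iff (by positivity) hp5ne]
    ring
  rw [key] at h
  have h2 : gv*A/p5 = 2*(p4-p2) + p6*A/p5 + 2*(c1-cn)*L := by linear_combination -h
  have key2 : gv*A/p5*(p5/A) = gv := by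
    field_simp
  have key3 : p6*A/p5*(p5/A) = p6 := by
    field_simp
  linear_combination (p5/A)*h2 - key2 + key3

/-- classification part of Theorem 1.1. Jet coordinates for a point
`p : Fin 7 → ℝ` are `p 0 = x`, `p 1 = u`, `p 2 = v`, `p 3 = u₁`, `p 4 = v₁`,
`p 5 = uₓ`, `p 6 = vₓ`.  If a semi-discrete system `u₁ₓ = f`, `v₁ₓ = g` (with `c(n+1) ≠ c(n)`)
possesses the `n`-integrals `I₁` and `I₂` identically in the jet variables, then `f` and `g`
have the form stated in Theorem 1.1. -/
theorem classification_semidiscrete_system_c_dependent_on_n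
    (c : ℤ → ℝ) (hc : ∀ n : ℤ, c (n + 1) ≠ c n)
    (f g : ℤ → (Fin 7 → ℝ) → ℝ)
    (D : ℤ → Set (Fin 7 → ℝ))
    (hD : ∀ n, D n = {p : Fin 7 → ℝ |
      0 < p 1 + p 2 + c n ∧ 0 < p 3 + p 4 + c (n + 1) ∧ 0 < p 5})
    (hf : ∀ n, ContDiffOn ℝ (⊤ : ℕ∞) (f n) (D n)) (hg : ∀ n, ContDiffOn ℝ (⊤ : ℕ∞) (g n) (D n))
    (hfpos : ∀ n, ∀ p ∈ D n, 0 < f n p)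
    (hI1 : ∀ n, ∀ p ∈ D n,
      2 * p 4 - g n p * (p 3 + p 4 + c (n + 1)) / f n p
          + 2 * c (n + 1) * Real.log (f n p / (p 3 + p 4 + c (n + 1)))
        = 2 * p 2 - p 6 * (p 1 + p 2 + c n) / p 5
          + 2 * c n * Real.log (p 5 / (p 1 + p 2 + c n)))
    (hI2 : ∀ n, ∀ p ∈ D n, ∀ uxx vxx : ℝ,
      (fderiv ℝ (f n) p (Pi.single 0 1)
          + fderiv ℝ (f n) p (Pi.single 1 1) * p 5
          + fderiv ℝ (f n) p (Pi.single 2 1) * p 6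
          + fderiv ℝ (f n) p (Pi.single 3 1) * f n p
          + fderiv ℝ (f n) p (Pi.single 4 1) * g n p
          + fderiv ℝ (f n) p (Pi.single 5 1) * uxx
          + fderiv ℝ (f n) p (Pi.single 6 1) * vxx) / f n p
          - (2 * f n p + g n p) / (p 3 + p 4 + c (n + 1))
        = uxx / p 5 - (2 * p 5 + p 6) / (p 1 + p 2 + c n)) :
    ∀ n, ∀ p ∈ D n,
      f n p = (p 3 + p 4 + c (n + 1)) * p 5 / (p 1 + p 2 + c n) ∧
      g n p = 2 * (p 4 - p 2) * p 5 / (p 1 + p 2 + c n)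
        + 2 * (c (n + 1) - c n) * (p 5 / (p 1 + p 2 + c n))
            * Real.log (p 5 / (p 1 + p 2 + c n))
        + p 6 := by
  intro n
  -- openness of the domain
  have hSopen : IsOpen (D n) := by
    rw [hD n]
    have h1 : IsOpen {p : Fin 7 → ℝ | 0 < p 1 + p 2 + c n} :=
      isOpen_lt continuous_const (by fun_prop)
    have h2 : IsOpen {p : Fin 7 → ℝ | 0 < p 3 + p 4 + c (n+1)} :=
      isOpen_lt continuous_const (by fun_prop)
    have h3 : IsOpen {p : Fin 7 → ℝ | 0 < p 5} :=
      isOpen_lt continuous_const (by fun_prop)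
    exact (h1.inter (h2.inter h3))
  have hmemD : ∀ p : Fin 7 → ℝ,
      p ∈ D n ↔ 0 < p 1 + p 2 + c n ∧ 0 < p 3 + p 4 + c (n+1) ∧ 0 < p 5 := by
    intro p; rw [hD n]; exact Iff.rfl
  have hmemJ : ∀ x u v u1 v1 ux vx : ℝ, 0 < u + v + c n → 0 < u1 + v1 + c (n+1) → 0 < ux →
      jp x u v u1 v1 ux vx ∈ D n := by
    intro x u v u1 v1 ux vx h1 h2 h3
    rw [hmemD]; simpa using ⟨h1, h2, h3⟩
  have hdal : ∀ p ∈ D n, DifferentiableAt ℝ (f n) p := by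
    intro p hp
    exact ((hf n).differentiableOn (by simp)).differentiableAt (hSopen.mem_nhds hp)
  -- Step 1 : derivatives in directions 5 and 6
  have hd5 : ∀ p ∈ D n, fderiv ℝ (f n) p (Pi.single 5 1) * p 5 = f n p := by
    intro p hp
    obtain ⟨hA, hB, hx⟩ := (hmemD p).1 hp
    have hF := hfpos n p hp
    have h00 := hI2 n p hp 0 0
    have h10 := hI2 n p hp 1 0
    have h5 : fderiv ℝ (f n) p (Pi.single 5 1) / f n p = 1 / p 5 := by
      linear_combination h10 - h00
    field_simp [hF.ne', hx.ne'] at h5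
    linarith
  have hd6 : ∀ p ∈ D n, fderiv ℝ (f n) p (Pi.single 6 1) = 0 := by
    intro p hp
    have hF := hfpos n p hp
    have h00 := hI2 n p hp 0 0
    have h01 := hI2 n p hp 0 1
    have h6 : fderiv ℝ (f n) p (Pi.single 6 1) / f n p = 0 := by
      linear_combination h01 - h00
    field_simp [hF.ne'] at h6
    simpa using h6
  -- Step 2 : scaling in ux, independence of vx
  have hbase : ∀ x u v u1 v1 ux vx : ℝ, 0 < u + v + c n → 0 < u1 + v1 + c (n+1) → 0 < ux →
      f n (jp x u v u1 v1 ux vx) = ux * f n (jp x u v u1 v1 1 0) := by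
    intro x u v u1 v1 ux vx hA hB hux
    have hscale : f n (jp x u v u1 v1 ux vx) / ux = f n (jp x u v u1 v1 1 vx) / 1 := by
      apply aux_const_line (h := fun t : ℝ => f n (jp x u v u1 v1 t vx) / t)
        (s := Set.Ioi 0) (convex_Ioi 0) isOpen_Ioi _ hux (by norm_num)
      intro t ht
      have hmem : jp x u v u1 v1 t vx ∈ D n := hmemJ _ _ _ _ _ _ _ hA hB ht
      have hline := aux_line_hasDerivAt hdal (jp x u v u1 v1 0 vx) 5 t
        (by rw [jp_add5]; simpa using hmem)
      simp only [jp_add5, zero_add] at hline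
      have h := hline.div (hasDerivAt_id t) (ne_of_gt ht)
      have h0 : (fderiv ℝ (f n) (jp x u v u1 v1 t vx) (Pi.single 5 1) * t
          - f n (jp x u v u1 v1 t vx) * 1) / t ^ 2 = 0 := by
        have h1 : fderiv ℝ (f n) (jp x u v u1 v1 t vx) (Pi.single 5 1) * t
            = f n (jp x u v u1 v1 t vx) := by simpa using hd5 _ hmem
        rw [h1]; simp
      exact h.congr_deriv h0
    have hvx : f n (jp x u v u1 v1 1 vx) = f n (jp x u v u1 v1 1 0) := by
      apply aux_const_line (h := fun t : ℝ => f n (jp x u v u1 v1 1 t))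
        (s := Set.univ) convex_univ isOpen_univ _ (Set.mem_univ vx) (Set.mem_univ 0)
      intro t _
      have hmem : jp x u v u1 v1 1 t ∈ D n := hmemJ _ _ _ _ _ _ _ hA hB one_pos
      have hline := aux_line_hasDerivAt hdal (jp x u v u1 v1 1 0) 6 t
        (by rw [jp_add6]; simpa using hmem)
      simp only [jp_add6, zero_add] at hline
      rwa [hd6 _ hmem] at hline
    rw [div_one] at hscale
    rw [← hvx]
    field_simp [ne_of_gt hux] at hscale
    linarith [hscale]
  -- Step 3 : main pointwise relations at base points
  have hL9 : ∀ x u v u1 v1 : ℝ, 0 < u + v + c n → 0 < u1 + v1 + c (n+1) →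
      fderiv ℝ (f n) (jp x u v u1 v1 1 0) (Pi.single 2 1) * (u + v + c n)
          = -(f n (jp x u v u1 v1 1 0)) ∧
      fderiv ℝ (f n) (jp x u v u1 v1 1 0) (Pi.single 4 1) * (u1 + v1 + c (n+1))
          = f n (jp x u v u1 v1 1 0) ∧
      (fderiv ℝ (f n) (jp x u v u1 v1 1 0) (Pi.single 1 1)
          + fderiv ℝ (f n) (jp x u v u1 v1 1 0) (Pi.single 3 1) * f n (jp x u v u1 v1 1 0))
          * ((u + v + c n) * (u1 + v1 + c (n+1)))
        = 2 * (f n (jp x u v u1 v1 1 0))^2 * (u + v + c n)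
          - 2 * (f n (jp x u v u1 v1 1 0)) * (u1 + v1 + c (n+1)) := by
    intro x u v u1 v1 hA0 hB0
    have hqmem : jp x u v u1 v1 1 0 ∈ D n := hmemJ _ _ _ _ _ _ _ hA0 hB0 one_pos
    set φ := f n (jp x u v u1 v1 1 0) with hphidef
    have hφ : 0 < φ := hfpos n _ hqmem
    set a0 := fderiv ℝ (f n) (jp x u v u1 v1 1 0) (Pi.single 0 1) with ha0def
    set a1 := fderiv ℝ (f n) (jp x u v u1 v1 1 0) (Pi.single 1 1) with ha1def
    set a2 := fderiv ℝ (f n) (jp x u v u1 v1 1 0) (Pi.single 2 1) with ha2def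
    set a3 := fderiv ℝ (f n) (jp x u v u1 v1 1 0) (Pi.single 3 1) with ha3def
    set a4 := fderiv ℝ (f n) (jp x u v u1 v1 1 0) (Pi.single 4 1) with ha4def
    set A := u + v + c n with hAdef
    set B := u1 + v1 + c (n+1) with hBdef
    have hAne : A ≠ 0 := ne_of_gt hA0
    have hBne : B ≠ 0 := ne_of_gt hB0
    have hφne : φ ≠ 0 := ne_of_gt hφ
    have hrmem : ∀ t s : ℝ, 0 < t → jp x u v u1 v1 t s ∈ D n := fun t s ht =>
      hmemJ _ _ _ _ _ _ _ hA0 hB0 ht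
    have hfr : ∀ t s : ℝ, 0 < t → f n (jp x u v u1 v1 t s) = t * φ := fun t s ht =>
      hbase _ _ _ _ _ _ _ hA0 hB0 ht
    -- derivative transfer lemmas
    have hdtr0 : ∀ t s : ℝ, 0 < t →
        fderiv ℝ (f n) (jp x u v u1 v1 t s) (Pi.single 0 1) = t * a0 := by
      intro t s ht
      have hmem := hrmem t s ht
      have hline1 := aux_line_hasDerivAt hdal (jp x u v u1 v1 t s) 0 0
        (by rw [jp_add0]; simpa using hmem)
      simp only [jp_add0, add_zero] at hline1
      have hline2 := (aux_line_hasDerivAt hdal (jp x u v u1 v1 1 0) 0 0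
        (by rw [jp_add0]; simpa using hqmem)).const_mul t
      simp only [jp_add0, add_zero] at hline2
      have hev : (fun w => f n (jp (x+w) u v u1 v1 t s))
          =ᶠ[nhds (0:ℝ)] (fun w => t * f n (jp (x+w) u v u1 v1 1 0)) := by
        filter_upwards [aux_eventually_mem hSopen _ 0 hmem] with w hw
        rw [jp_add0] at hw
        obtain ⟨h1, h2, h3⟩ := (hmemD _).1 hw
        exact hbase _ _ _ _ _ _ _ (by simpa using h1) (by simpa using h2) ht
      exact hline1.unique (hline2.congr_of_eventuallyEq hev)
    have hdtr1 : ∀ t s : ℝ, 0 < t →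
        fderiv ℝ (f n) (jp x u v u1 v1 t s) (Pi.single 1 1) = t * a1 := by
      intro t s ht
      have hmem := hrmem t s ht
      have hline1 := aux_line_hasDerivAt hdal (jp x u v u1 v1 t s) 1 0
        (by rw [jp_add1]; simpa using hmem)
      simp only [jp_add1, add_zero] at hline1
      have hline2 := (aux_line_hasDerivAt hdal (jp x u v u1 v1 1 0) 1 0
        (by rw [jp_add1]; simpa using hqmem)).const_mul t
      simp only [jp_add1, add_zero] at hline2
      have hev : (fun w => f n (jp x (u+w) v u1 v1 t s))
          =ᶠ[nhds (0:ℝ)] (fun w => t * f n (jp x (u+w) v u1 v1 1 0)) := by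
        filter_upwards [aux_eventually_mem hSopen _ 1 hmem] with w hw
        rw [jp_add1] at hw
        obtain ⟨h1, h2, h3⟩ := (hmemD _).1 hw
        exact hbase _ _ _ _ _ _ _ (by simpa using h1) (by simpa using h2) ht
      exact hline1.unique (hline2.congr_of_eventuallyEq hev)
    have hdtr2 : ∀ t s : ℝ, 0 < t →
        fderiv ℝ (f n) (jp x u v u1 v1 t s) (Pi.single 2 1) = t * a2 := by
      intro t s ht
      have hmem := hrmem t s ht
      have hline1 := aux_line_hasDerivAt hdal (jp x u v u1 v1 t s) 2 0
        (by rw [jp_add2]; simpa using hmem)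
      simp only [jp_add2, add_zero] at hline1
      have hline2 := (aux_line_hasDerivAt hdal (jp x u v u1 v1 1 0) 2 0
        (by rw [jp_add2]; simpa using hqmem)).const_mul t
      simp only [jp_add2, add_zero] at hline2
      have hev : (fun w => f n (jp x u (v+w) u1 v1 t s))
          =ᶠ[nhds (0:ℝ)] (fun w => t * f n (jp x u (v+w) u1 v1 1 0)) := by
        filter_upwards [aux_eventually_mem hSopen _ 2 hmem] with w hw
        rw [jp_add2] at hw
        obtain ⟨h1, h2, h3⟩ := (hmemD _).1 hw
        exact hbase _ _ _ _ _ _ _ (by simpa using h1) (by simpa using h2) ht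
      exact hline1.unique (hline2.congr_of_eventuallyEq hev)
    have hdtr3 : ∀ t s : ℝ, 0 < t →
        fderiv ℝ (f n) (jp x u v u1 v1 t s) (Pi.single 3 1) = t * a3 := by
      intro t s ht
      have hmem := hrmem t s ht
      have hline1 := aux_line_hasDerivAt hdal (jp x u v u1 v1 t s) 3 0
        (by rw [jp_add3]; simpa using hmem)
      simp only [jp_add3, add_zero] at hline1
      have hline2 := (aux_line_hasDerivAt hdal (jp x u v u1 v1 1 0) 3 0
        (by rw [jp_add3]; simpa using hqmem)).const_mul t
      simp only [jp_add3, add_zero] at hline2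
      have hev : (fun w => f n (jp x u v (u1+w) v1 t s))
          =ᶠ[nhds (0:ℝ)] (fun w => t * f n (jp x u v (u1+w) v1 1 0)) := by
        filter_upwards [aux_eventually_mem hSopen _ 3 hmem] with w hw
        rw [jp_add3] at hw
        obtain ⟨h1, h2, h3⟩ := (hmemD _).1 hw
        exact hbase _ _ _ _ _ _ _ (by simpa using h1) (by simpa using h2) ht
      exact hline1.unique (hline2.congr_of_eventuallyEq hev)
    have hdtr4 : ∀ t s : ℝ, 0 < t →
        fderiv ℝ (f n) (jp x u v u1 v1 t s) (Pi.single 4 1) = t * a4 := by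
      intro t s ht
      have hmem := hrmem t s ht
      have hline1 := aux_line_hasDerivAt hdal (jp x u v u1 v1 t s) 4 0
        (by rw [jp_add4]; simpa using hmem)
      simp only [jp_add4, add_zero] at hline1
      have hline2 := (aux_line_hasDerivAt hdal (jp x u v u1 v1 1 0) 4 0
        (by rw [jp_add4]; simpa using hqmem)).const_mul t
      simp only [jp_add4, add_zero] at hline2
      have hev : (fun w => f n (jp x u v u1 (v1+w) t s))
          =ᶠ[nhds (0:ℝ)] (fun w => t * f n (jp x u v u1 (v1+w) 1 0)) := by
        filter_upwards [aux_eventually_mem hSopen _ 4 hmem] with w hw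
        rw [jp_add4] at hw
        obtain ⟨h1, h2, h3⟩ := (hmemD _).1 hw
        exact hbase _ _ _ _ _ _ _ (by simpa using h1) (by simpa using h2) ht
      exact hline1.unique (hline2.congr_of_eventuallyEq hev)
    -- value of g along the fibre
    set K := 2*(v1 - v) + 2*(c n)*Real.log A + 2*(c (n+1))*(Real.log φ - Real.log B)
      with hKdef
    have hGV : ∀ t s : ℝ, 0 < t →
        g n (jp x u v u1 v1 t s) * B
          = t*φ*(K + 2*(c (n+1) - c n)*Real.log t) + s*φ*A := by
      intro t s ht
      have h := hI1 n _ (hrmem t s ht)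
      simp only [jp0, jp1, jp2, jp3, jp4, jp5, jp6] at h
      rw [hfr t s ht] at h
      rw [Real.log_div (mul_ne_zero (ne_of_gt ht) hφne) hBne,
        Real.log_mul (ne_of_gt ht) hφne,
        Real.log_div (ne_of_gt ht) hAne] at h
      exact stage4_gval _ _ _ _ _ _ _ _ _ _ _ _ _ _ hAne hBne hφne (ne_of_gt ht) h
    have hP : ∀ t L s : ℝ, 0 < t → Real.log t = L →
        A*B^2*t*(a0 + a1*t + a2*s + a3*t*φ)
          + A*B*t*a4*(t*φ*(K + 2*(c (n+1) - c n)*L) + s*φ*A) + (2*t+s)*t*φ*B^2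
        = t*φ*A*(2*t*φ*B + (t*φ*(K + 2*(c (n+1) - c n)*L) + s*φ*A)) := by
      intro t L s ht hL
      have h := hI2 n _ (hrmem t s ht) 0 0
      simp only [jp0, jp1, jp2, jp3, jp4, jp5, jp6] at h
      rw [hfr t s ht, hdtr0 t s ht, hdtr1 t s ht, hdtr2 t s ht, hdtr3 t s ht,
        hdtr4 t s ht] at h
      have hGt := hGV t s ht
      rw [hL] at hGt
      exact stage4_master _ _ _ _ _ _ _ _ _ _ _ _ _ _ hAne hBne hφne (ne_of_gt ht) hGt h
    exact stage4_algebra (c n) (c (n+1)) A B φ K a0 a1 a2 a3 a4 hA0 hB0 hφ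
      (sub_ne_zero.mpr (hc n)) hP
  -- Step 4 : независимость combination f·A/B from v and v1
  have hpsiv : ∀ x u v u1 v1 d : ℝ, 0 < u + v + c n → 0 < u1 + v1 + c (n+1) →
      0 < u + (v + d) + c n →
      f n (jp x u (v+d) u1 v1 1 0) * (u + (v + d) + c n)
        = f n (jp x u v u1 v1 1 0) * (u + v + c n) := by
    intro x u v u1 v1 d hA0 hB0 hAd
    have hcon := aux_const_line (h := fun w : ℝ => f n (jp x u (v+w) u1 v1 1 0) * (u + (v+w) + c n))
      (s := Set.Ioi (-(u + v + c n))) (convex_Ioi _) isOpen_Ioi ?_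
      (show d ∈ Set.Ioi (-(u+v+c n)) by simp only [Set.mem_Ioi]; linarith)
      (show (0:ℝ) ∈ Set.Ioi (-(u+v+c n)) by simp only [Set.mem_Ioi]; linarith)
    · simpa using hcon
    · intro w hw
      simp only [Set.mem_Ioi] at hw
      have hAw : 0 < u + (v + w) + c n := by linarith
      have hmemw : jp x u (v+w) u1 v1 1 0 ∈ D n := hmemJ _ _ _ _ _ _ _ hAw hB0 one_pos
      have hline := aux_line_hasDerivAt hdal (jp x u v u1 v1 1 0) 2 w
        (by rw [jp_add2]; exact hmemw)
      simp only [jp_add2] at hline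
      have hlin : HasDerivAt (fun w' : ℝ => u + (v + w') + c n) 1 w := by
        have h0 : (fun w' : ℝ => u + (v + w') + c n) = fun w' : ℝ => (u + v + c n) + w' := by
          funext w'; ring
        rw [h0]
        simpa using (hasDerivAt_id w).const_add (u + v + c n)
      have hmul := hline.mul hlin
      have h2 := (hL9 x u (v+w) u1 v1 hAw hB0).1
      exact hmul.congr_deriv (by linear_combination h2)
  have hpsiv1 : ∀ x u v u1 v1 d : ℝ, 0 < u + v + c n → 0 < u1 + v1 + c (n+1) →
      0 < u1 + (v1 + d) + c (n+1) →
      f n (jp x u v u1 (v1+d) 1 0) * (u1 + v1 + c (n+1))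
        = f n (jp x u v u1 v1 1 0) * (u1 + (v1 + d) + c (n+1)) := by
    intro x u v u1 v1 d hA0 hB0 hBd
    have hcon := aux_const_line
      (h := fun w : ℝ => f n (jp x u v u1 (v1+w) 1 0) / (u1 + (v1+w) + c (n+1)))
      (s := Set.Ioi (-(u1 + v1 + c (n+1)))) (convex_Ioi _) isOpen_Ioi ?_
      (show d ∈ Set.Ioi (-(u1+v1+c (n+1))) by simp only [Set.mem_Ioi]; linarith)
      (show (0:ℝ) ∈ Set.Ioi (-(u1+v1+c (n+1))) by simp only [Set.mem_Ioi]; linarith)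
    · simp only [add_zero] at hcon
      rw [div_eq_div_iff (by linarith) (by linarith)] at hcon
      simpa using hcon
    · intro w hw
      simp only [Set.mem_Ioi] at hw
      have hBw : 0 < u1 + (v1 + w) + c (n+1) := by linarith
      have hmemw : jp x u v u1 (v1+w) 1 0 ∈ D n := hmemJ _ _ _ _ _ _ _ hA0 hBw one_pos
      have hline := aux_line_hasDerivAt hdal (jp x u v u1 v1 1 0) 4 w
        (by rw [jp_add4]; exact hmemw)
      simp only [jp_add4] at hline
      have hlin : HasDerivAt (fun w' : ℝ => u1 + (v1 + w') + c (n+1)) 1 w := by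
        have h0 : (fun w' : ℝ => u1 + (v1 + w') + c (n+1))
            = fun w' : ℝ => (u1 + v1 + c (n+1)) + w' := by
          funext w'; ring
        rw [h0]
        simpa using (hasDerivAt_id w).const_add (u1 + v1 + c (n+1))
      have hdiv := hline.div hlin (by intro hcontra; rw [hcontra] at hBw; exact lt_irrefl 0 hBw)
      have h4 := (hL9 x u v u1 (v1+w) hA0 hBw).2.1
      refine hdiv.congr_deriv ?_
      rw [show fderiv ℝ (f n) (jp x u v u1 (v1+w) 1 0) (Pi.single 4 1) * (u1 + (v1+w) + c (n+1))
          - f n (jp x u v u1 (v1+w) 1 0) * 1 = 0 from by linear_combination h4]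
      simp
  -- Step 5 : value of f at base points
  have hfq : ∀ x u v u1 v1 : ℝ, 0 < u + v + c n → 0 < u1 + v1 + c (n+1) →
      f n (jp x u v u1 v1 1 0) * (u + v + c n) = u1 + v1 + c (n+1) := by
    intro x u v u1 v1 hA0 hB0
    have hqmem : jp x u v u1 v1 1 0 ∈ D n := hmemJ _ _ _ _ _ _ _ hA0 hB0 one_pos
    have hq10mem : jp x u (v+1) u1 v1 1 0 ∈ D n :=
      hmemJ _ _ _ _ _ _ _ (by linarith) hB0 one_pos
    have hq01mem : jp x u v u1 (v1+1) 1 0 ∈ D n :=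
      hmemJ _ _ _ _ _ _ _ hA0 (by linarith) one_pos
    have hF1raw := hpsiv x u v u1 v1 1 hA0 hB0 (by linarith)
    have hF2raw := hpsiv1 x u v u1 v1 1 hA0 hB0 (by linarith)
    -- transfer T1
    have hT1raw : fderiv ℝ (f n) (jp x u (v+1) u1 v1 1 0) (Pi.single 1 1) * (u + (v+1) + c n)
          + f n (jp x u (v+1) u1 v1 1 0)
        = fderiv ℝ (f n) (jp x u v u1 v1 1 0) (Pi.single 1 1) * (u + v + c n)
          + f n (jp x u v u1 v1 1 0) := by
      have hlineL := aux_line_hasDerivAt hdal (jp x u (v+1) u1 v1 1 0) 1 0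
        (by rw [jp_add1]; simpa using hq10mem)
      simp only [jp_add1, add_zero] at hlineL
      have haffL : HasDerivAt (fun w : ℝ => u + w + (v+1) + c n) 1 0 := by
        have h0 : (fun w : ℝ => u + w + (v+1) + c n)
            = fun w : ℝ => (u + (v+1) + c n) + w := by funext w'; ring
        rw [h0]; simpa using (hasDerivAt_id (0:ℝ)).const_add (u + (v+1) + c n)
      have hL := hlineL.mul haffL
      have hlineR := aux_line_hasDerivAt hdal (jp x u v u1 v1 1 0) 1 0
        (by rw [jp_add1]; simpa using hqmem)
      simp only [jp_add1, add_zero] at hlineR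
      have haffR : HasDerivAt (fun w : ℝ => u + w + v + c n) 1 0 := by
        have h0 : (fun w : ℝ => u + w + v + c n)
            = fun w : ℝ => (u + v + c n) + w := by funext w'; ring
        rw [h0]; simpa using (hasDerivAt_id (0:ℝ)).const_add (u + v + c n)
      have hR := hlineR.mul haffR
      have hev : (fun w : ℝ => f n (jp x (u+w) (v+1) u1 v1 1 0) * (u + w + (v+1) + c n))
          =ᶠ[nhds (0:ℝ)]
          (fun w : ℝ => f n (jp x (u+w) v u1 v1 1 0) * (u + w + v + c n)) := by
        filter_upwards [Ioi_mem_nhds (show -(u+v+c n) < (0:ℝ) by linarith)] with w hw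
        have hw' : -(u+v+c n) < w := hw
        exact hpsiv x (u+w) v u1 v1 1 (by linarith) hB0 (by linarith)
      have huniq := hL.unique (hR.congr_of_eventuallyEq hev)
      simp only [add_zero, mul_one] at huniq
      linear_combination huniq
    -- transfer T2
    have hT2raw : fderiv ℝ (f n) (jp x u (v+1) u1 v1 1 0) (Pi.single 3 1) * (u + (v+1) + c n)
        = fderiv ℝ (f n) (jp x u v u1 v1 1 0) (Pi.single 3 1) * (u + v + c n) := by
      have hlineL := aux_line_hasDerivAt hdal (jp x u (v+1) u1 v1 1 0) 3 0
        (by rw [jp_add3]; simpa using hq10mem)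
      simp only [jp_add3, add_zero] at hlineL
      have hL := hlineL.mul_const (u + (v+1) + c n)
      have hlineR := aux_line_hasDerivAt hdal (jp x u v u1 v1 1 0) 3 0
        (by rw [jp_add3]; simpa using hqmem)
      simp only [jp_add3, add_zero] at hlineR
      have hR := hlineR.mul_const (u + v + c n)
      have hev : (fun w : ℝ => f n (jp x u (v+1) (u1+w) v1 1 0) * (u + (v+1) + c n))
          =ᶠ[nhds (0:ℝ)]
          (fun w : ℝ => f n (jp x u v (u1+w) v1 1 0) * (u + v + c n)) := by
        filter_upwards [Ioi_mem_nhds (show -(u1+v1+c (n+1)) < (0:ℝ) by linarith)] with w hw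
        have hw' : -(u1+v1+c (n+1)) < w := hw
        exact hpsiv x u v (u1+w) v1 1 hA0 (by linarith) (by linarith)
      have huniq := hL.unique (hR.congr_of_eventuallyEq hev)
      linear_combination huniq
    -- transfer T3
    have hT3raw : fderiv ℝ (f n) (jp x u v u1 (v1+1) 1 0) (Pi.single 1 1) * (u1 + v1 + c (n+1))
        = fderiv ℝ (f n) (jp x u v u1 v1 1 0) (Pi.single 1 1) * (u1 + (v1+1) + c (n+1)) := by
      have hlineL := aux_line_hasDerivAt hdal (jp x u v u1 (v1+1) 1 0) 1 0
        (by rw [jp_add1]; simpa using hq01mem)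
      simp only [jp_add1, add_zero] at hlineL
      have hL := hlineL.mul_const (u1 + v1 + c (n+1))
      have hlineR := aux_line_hasDerivAt hdal (jp x u v u1 v1 1 0) 1 0
        (by rw [jp_add1]; simpa using hqmem)
      simp only [jp_add1, add_zero] at hlineR
      have hR := hlineR.mul_const (u1 + (v1+1) + c (n+1))
      have hev : (fun w : ℝ => f n (jp x (u+w) v u1 (v1+1) 1 0) * (u1 + v1 + c (n+1)))
          =ᶠ[nhds (0:ℝ)]
          (fun w : ℝ => f n (jp x (u+w) v u1 v1 1 0) * (u1 + (v1+1) + c (n+1))) := by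
        filter_upwards [Ioi_mem_nhds (show -(u+v+c n) < (0:ℝ) by linarith)] with w hw
        have hw' : -(u+v+c n) < w := hw
        exact hpsiv1 x (u+w) v u1 v1 1 (by linarith) hB0 (by linarith)
      have huniq := hL.unique (hR.congr_of_eventuallyEq hev)
      linear_combination huniq
    -- transfer T4
    have hT4raw : fderiv ℝ (f n) (jp x u v u1 (v1+1) 1 0) (Pi.single 3 1) * (u1 + v1 + c (n+1))
          + f n (jp x u v u1 (v1+1) 1 0)
        = fderiv ℝ (f n) (jp x u v u1 v1 1 0) (Pi.single 3 1) * (u1 + (v1+1) + c (n+1))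
          + f n (jp x u v u1 v1 1 0) := by
      have hlineL := aux_line_hasDerivAt hdal (jp x u v u1 (v1+1) 1 0) 3 0
        (by rw [jp_add3]; simpa using hq01mem)
      simp only [jp_add3, add_zero] at hlineL
      have haffL : HasDerivAt (fun w : ℝ => u1 + w + v1 + c (n+1)) 1 0 := by
        have h0 : (fun w : ℝ => u1 + w + v1 + c (n+1))
            = fun w : ℝ => (u1 + v1 + c (n+1)) + w := by funext w'; ring
        rw [h0]; simpa using (hasDerivAt_id (0:ℝ)).const_add (u1 + v1 + c (n+1))
      have hL := hlineL.mul haffL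
      have hlineR := aux_line_hasDerivAt hdal (jp x u v u1 v1 1 0) 3 0
        (by rw [jp_add3]; simpa using hqmem)
      simp only [jp_add3, add_zero] at hlineR
      have haffR : HasDerivAt (fun w : ℝ => u1 + w + (v1+1) + c (n+1)) 1 0 := by
        have h0 : (fun w : ℝ => u1 + w + (v1+1) + c (n+1))
            = fun w : ℝ => (u1 + (v1+1) + c (n+1)) + w := by funext w'; ring
        rw [h0]; simpa using (hasDerivAt_id (0:ℝ)).const_add (u1 + (v1+1) + c (n+1))
      have hR := hlineR.mul haffR
      have hev : (fun w : ℝ => f n (jp x u v (u1+w) (v1+1) 1 0) * (u1 + w + v1 + c (n+1)))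
          =ᶠ[nhds (0:ℝ)]
          (fun w : ℝ => f n (jp x u v (u1+w) v1 1 0) * (u1 + w + (v1+1) + c (n+1))) := by
        filter_upwards [Ioi_mem_nhds (show -(u1+v1+c (n+1)) < (0:ℝ) by linarith)] with w hw
        have hw' : -(u1+v1+c (n+1)) < w := hw
        exact hpsiv1 x u v (u1+w) v1 1 hA0 (by linarith) (by linarith)
      have huniq := hL.unique (hR.congr_of_eventuallyEq hev)
      simp only [add_zero, mul_one] at huniq
      linear_combination huniq
    have hIraw := (hL9 x u v u1 v1 hA0 hB0).2.2
    have hIIraw := (hL9 x u (v+1) u1 v1 (by linarith) hB0).2.2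
    have hIIIraw := (hL9 x u v u1 (v1+1) hA0 (by linarith)).2.2
    exact stage6 (u+v+c n) (u1+v1+c (n+1)) (f n (jp x u v u1 v1 1 0))
      (fderiv ℝ (f n) (jp x u v u1 v1 1 0) (Pi.single 1 1))
      (fderiv ℝ (f n) (jp x u v u1 v1 1 0) (Pi.single 3 1))
      (f n (jp x u (v+1) u1 v1 1 0)) (f n (jp x u v u1 (v1+1) 1 0))
      (fderiv ℝ (f n) (jp x u (v+1) u1 v1 1 0) (Pi.single 1 1))
      (fderiv ℝ (f n) (jp x u (v+1) u1 v1 1 0) (Pi.single 3 1))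
      (fderiv ℝ (f n) (jp x u v u1 (v1+1) 1 0) (Pi.single 1 1))
      (fderiv ℝ (f n) (jp x u v u1 (v1+1) 1 0) (Pi.single 3 1))
      hA0 hB0 (hfpos n _ hqmem) (by linear_combination hF1raw) (by linear_combination hT1raw)
      (by linear_combination hT2raw) (by linear_combination hF2raw)
      (by linear_combination hT3raw) (by linear_combination hT4raw)
      (by linear_combination hIraw) (by linear_combination hIIraw)
      (by linear_combination hIIIraw)
  -- Step 6 : conclusion
  intro p hp
  obtain ⟨hA0, hB0, hx⟩ := (hmemD p).1 hp
  have hpe : jp (p 0) (p 1) (p 2) (p 3) (p 4) (p 5) (p 6) = p := (jp_eta p).symm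
  have h1 : f n p = p 5 * f n (jp (p 0) (p 1) (p 2) (p 3) (p 4) 1 0) := by
    have h := hbase (p 0) (p 1) (p 2) (p 3) (p 4) (p 5) (p 6) hA0 hB0 hx
    rwa [hpe] at h
  have h2 := hfq (p 0) (p 1) (p 2) (p 3) (p 4) hA0 hB0
  have hfp : f n p = (p 3 + p 4 + c (n + 1)) * p 5 / (p 1 + p 2 + c n) := by
    rw [h1, eq_div_iff (ne_of_gt hA0)]
    linear_combination p 5 * h2
  refine ⟨hfp, ?_⟩
  have h := hI1 n p hp
  rw [hfp] at h
  have hlog : (p 3 + p 4 + c (n + 1)) * p 5 / (p 1 + p 2 + c n) / (p 3 + p 4 + c (n + 1))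
      = p 5 / (p 1 + p 2 + c n) := by
    rw [div_eq_iff (ne_of_gt hB0)]
    ring
  rw [hlog] at h
  exact final_g _ _ _ _ _ _ _ _ _ _ hA0 hB0 hx h
end

section
/- Let c be a real constant. For every solution u, v : ℤ × ℝ → ℝ of the semi-discrete system u_{1x} = (u_1+v_1+c)u_x/(u+v+c), v_{1x} = 2(v_1-v)u_x/(u+v+c) + v_x, satisfying u(n,·)+v(n,·)+c > 0 and u_x(n,·) > 0 for all n, both functions I_1 = 2v - v_x(u+v+c)/u_x + 2c·ln(u_x/(u+v+c)) and I_2 = u_{xx}/u_x - (2u_x+v_x)/(u+v+c) are n-integrals: each, evaluated at level n+1 (with u, v replaced by u_1, v_1 and their x-derivatives), equals its value at level n, for all n and x. -/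
/-- Theorem 1.2, case `B = 1`: for every solution of the semi-discrete
system `u₁ₓ = (u₁+v₁+c)uₓ/(u+v+c)`, `v₁ₓ = 2(v₁-v)uₓ/(u+v+c) + vₓ`, both
`I₁ = 2v - vₓ(u+v+c)/uₓ + 2c·ln(uₓ/(u+v+c))` and `I₂ = uₓₓ/uₓ - (2uₓ+vₓ)/(u+v+c)`
are `n`-integrals. -/
theorem n_integrals_of_semidiscrete_system_constant_c (c : ℝ) (u v : ℤ → ℝ → ℝ)
    (hu : ∀ n, ContDiff ℝ (⊤ : ℕ∞) (u n)) (hv : ∀ n, ContDiff ℝ (⊤ : ℕ∞) (v n))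
    (hpos : ∀ n x, 0 < u n x + v n x + c)
    (hux : ∀ n x, 0 < deriv (u n) x)
    (hsysu : ∀ n x, deriv (u (n + 1)) x =
      (u (n + 1) x + v (n + 1) x + c) * deriv (u n) x / (u n x + v n x + c))
    (hsysv : ∀ n x, deriv (v (n + 1)) x =
      2 * (v (n + 1) x - v n x) * deriv (u n) x / (u n x + v n x + c) + deriv (v n) x) :
    ∀ n x,
      (2 * v (n + 1) x
          - deriv (v (n + 1)) x * (u (n + 1) x + v (n + 1) x + c) / deriv (u (n + 1)) x
          + 2 * c * Real.log (deriv (u (n + 1)) x / (u (n + 1) x + v (n + 1) x + c))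
        = 2 * v n x - deriv (v n) x * (u n x + v n x + c) / deriv (u n) x
          + 2 * c * Real.log (deriv (u n) x / (u n x + v n x + c))) ∧
      (deriv (deriv (u (n + 1))) x / deriv (u (n + 1)) x
          - (2 * deriv (u (n + 1)) x + deriv (v (n + 1)) x) / (u (n + 1) x + v (n + 1) x + c)
        = deriv (deriv (u n)) x / deriv (u n) x
          - (2 * deriv (u n) x + deriv (v n) x) / (u n x + v n x + c)) := by
  have hdU : ∀ m, Differentiable ℝ (u m) := fun m => (hu m).differentiable (by simp)
  have hdV : ∀ m, Differentiable ℝ (v m) := fun m => (hv m).differentiable (by simp)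
  have hdU' : ∀ m, Differentiable ℝ (deriv (u m)) := fun m =>
    ((contDiff_infty_iff_deriv.mp ((hu m).of_le (by simp))).2).differentiable (by simp)
  intro n x
  have hA : u n x + v n x + c ≠ 0 := (hpos n x).ne'
  have hA1 : u (n+1) x + v (n+1) x + c ≠ 0 := (hpos (n+1) x).ne'
  have hux0 : deriv (u n) x ≠ 0 := (hux n x).ne'
  have hux1 : deriv (u (n+1)) x ≠ 0 := (hux (n+1) x).ne'
  have h1 := hsysu n x
  have h2 := hsysv n x
  constructor
  · have hlog : deriv (u (n+1)) x / (u (n+1) x + v (n+1) x + c)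
        = deriv (u n) x / (u n x + v n x + c) := by
      rw [h1]; field_simp
    rw [hlog, h1, h2]
    field_simp
    ring
  · -- second derivative of u (n+1)
    have hder : deriv (u (n+1)) = fun y =>
        (u (n+1) y + v (n+1) y + c) * deriv (u n) y / (u n y + v n y + c) :=
      funext (hsysu n)
    have hNd : Differentiable ℝ (fun y => (u (n+1) y + v (n+1) y + c) * deriv (u n) y) :=
      (((hdU (n+1)).add (hdV (n+1))).add_const c).mul (hdU' n)
    have hDd : Differentiable ℝ (fun y => u n y + v n y + c) :=
      ((hdU n).add (hdV n)).add_const c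
    have hderiv2 : deriv (deriv (u (n+1))) x =
        (((deriv (u (n+1)) x + deriv (v (n+1)) x) * deriv (u n) x
            + (u (n+1) x + v (n+1) x + c) * deriv (deriv (u n)) x)
          * (u n x + v n x + c)
          - (u (n+1) x + v (n+1) x + c) * deriv (u n) x
            * (deriv (u n) x + deriv (v n) x))
        / (u n x + v n x + c) ^ 2 := by
      rw [hder]
      rw [deriv_fun_div (hNd x) (hDd x) hA]
      have hN : deriv (fun y => (u (n+1) y + v (n+1) y + c) * deriv (u n) y) x
          = (deriv (u (n+1)) x + deriv (v (n+1)) x) * deriv (u n) x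
            + (u (n+1) x + v (n+1) x + c) * deriv (deriv (u n)) x := by
        rw [deriv_fun_mul (show DifferentiableAt ℝ (fun y => u (n+1) y + v (n+1) y + c) x from (((hdU (n+1)).add (hdV (n+1))).add_const c) x) (hdU' n x)]
        congr 1
        rw [deriv_add_const, deriv_fun_add ((hdU (n+1)) x) ((hdV (n+1)) x)]
      have hD : deriv (fun y => u n y + v n y + c) x
          = deriv (u n) x + deriv (v n) x := by
        rw [deriv_add_const, deriv_fun_add ((hdU n) x) ((hdV n) x)]
      rw [hN, hD]
      simp only [h1]
    rw [hderiv2, h1, h2]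
    field_simp
    ring
end

section
/- Let c be a real constant and let B = B(u,v,u_1,v_1) be a smooth positive function on the domain where u+v+c > 0 and u_1+v_1+c > 0, satisfying the two first-order PDEs B_u/B + ((u_1+v_1+c)/(u+v+c))B_{u_1} + 2((v_1-v+c·ln B)/(u+v+c))B_{v_1} + (1-B)/(u+v+c) = 0 and B_v/B + B_{v_1} = 0. Then every solution u, v : ℤ × ℝ → ℝ of the semi-discrete system u_{1x} = (u_1+v_1+c)B u_x/(u+v+c), v_{1x} = 2B(v_1-v+c·ln B)u_x/(u+v+c) + B v_x, with u(n,·)+v(n,·)+c > 0 and u_x(n,·) > 0 for all n, admits the n-integrals I_1 = 2v - v_x(u+v+c)/u_x + 2c·ln(u_x/(u+v+c)) and I_2 = u_{xx}/u_x - (2u_x+v_x)/(u+v+c): each, evaluated at level n+1, equals its value at level n, for all n and x. -/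
/-- nondegenerate case of Theorem 1.2: if `B(u,v,u₁,v₁)` is a smooth positive
function on the domain `u+v+c > 0`, `u₁+v₁+c > 0` satisfying the two first-order PDEs
(2.17)–(2.18), then every solution of the semi-discrete system
`u₁ₓ = (u₁+v₁+c)Buₓ/(u+v+c)`, `v₁ₓ = 2B(v₁-v+c·ln B)uₓ/(u+v+c) + Bvₓ`
admits the `n`-integrals `I₁` and `I₂`. -/
theorem n_integrals_of_semidiscrete_system_general_B (c : ℝ)
    (B : ℝ → ℝ → ℝ → ℝ → ℝ)
    (hB : ContDiffOn ℝ (⊤ : ℕ∞) (fun p : ℝ × ℝ × ℝ × ℝ => B p.1 p.2.1 p.2.2.1 p.2.2.2)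
      {p : ℝ × ℝ × ℝ × ℝ | 0 < p.1 + p.2.1 + c ∧ 0 < p.2.2.1 + p.2.2.2 + c})
    (hBpos : ∀ a b a₁ b₁ : ℝ, 0 < a + b + c → 0 < a₁ + b₁ + c → 0 < B a b a₁ b₁)
    (hpde1 : ∀ a b a₁ b₁ : ℝ, 0 < a + b + c → 0 < a₁ + b₁ + c →
      deriv (fun t => B t b a₁ b₁) a / B a b a₁ b₁
        + ((a₁ + b₁ + c) / (a + b + c)) * deriv (fun t => B a b t b₁) a₁
        + 2 * ((b₁ - b + c * Real.log (B a b a₁ b₁)) / (a + b + c))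
            * deriv (fun t => B a b a₁ t) b₁
        + (1 - B a b a₁ b₁) / (a + b + c) = 0)
    (hpde2 : ∀ a b a₁ b₁ : ℝ, 0 < a + b + c → 0 < a₁ + b₁ + c →
      deriv (fun t => B a t a₁ b₁) b / B a b a₁ b₁ + deriv (fun t => B a b a₁ t) b₁ = 0)
    (u v : ℤ → ℝ → ℝ)
    (hu : ∀ n, ContDiff ℝ (⊤ : ℕ∞) (u n)) (hv : ∀ n, ContDiff ℝ (⊤ : ℕ∞) (v n))
    (hpos : ∀ n x, 0 < u n x + v n x + c)
    (hux : ∀ n x, 0 < deriv (u n) x)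
    (hsysu : ∀ n x, deriv (u (n + 1)) x =
      (u (n + 1) x + v (n + 1) x + c) * B (u n x) (v n x) (u (n + 1) x) (v (n + 1) x)
        * deriv (u n) x / (u n x + v n x + c))
    (hsysv : ∀ n x, deriv (v (n + 1)) x =
      2 * B (u n x) (v n x) (u (n + 1) x) (v (n + 1) x)
          * (v (n + 1) x - v n x + c * Real.log (B (u n x) (v n x) (u (n + 1) x) (v (n + 1) x)))
          * deriv (u n) x / (u n x + v n x + c)
        + B (u n x) (v n x) (u (n + 1) x) (v (n + 1) x) * deriv (v n) x) :
    ∀ n x,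
      (2 * v (n + 1) x
          - deriv (v (n + 1)) x * (u (n + 1) x + v (n + 1) x + c) / deriv (u (n + 1)) x
          + 2 * c * Real.log (deriv (u (n + 1)) x / (u (n + 1) x + v (n + 1) x + c))
        = 2 * v n x - deriv (v n) x * (u n x + v n x + c) / deriv (u n) x
          + 2 * c * Real.log (deriv (u n) x / (u n x + v n x + c))) ∧
      (deriv (deriv (u (n + 1))) x / deriv (u (n + 1)) x
          - (2 * deriv (u (n + 1)) x + deriv (v (n + 1)) x) / (u (n + 1) x + v (n + 1) x + c)
        = deriv (deriv (u n)) x / deriv (u n) x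
          - (2 * deriv (u n) x + deriv (v n) x) / (u n x + v n x + c)) := by
  have hSopen : IsOpen {p : ℝ × ℝ × ℝ × ℝ | 0 < p.1 + p.2.1 + c ∧ 0 < p.2.2.1 + p.2.2.2 + c} := by
    rw [Set.setOf_and]
    exact (isOpen_lt continuous_const (by fun_prop)).inter
      (isOpen_lt continuous_const (by fun_prop))
  intro n x
  have hu1x := hsysu n x
  have hv1x := hsysv n x
  have hD := hpos n x
  have hD1 := hpos (n + 1) x
  have hax := hux n x
  have e1 := hpde1 (u n x) (v n x) (u (n + 1) x) (v (n + 1) x) hD hD1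
  have e2 := hpde2 (u n x) (v n x) (u (n + 1) x) (v (n + 1) x) hD hD1
  have hBv := hBpos (u n x) (v n x) (u (n + 1) x) (v (n + 1) x) hD hD1
  set a := u n x with ha
  set b := v n x with hb
  set a₁ := u (n + 1) x with ha₁
  set b₁ := v (n + 1) x with hb₁
  set ax := deriv (u n) x with hax'
  set bx := deriv (v n) x with hbx'
  set a1x := deriv (u (n + 1)) x with ha1x'
  set b1x := deriv (v (n + 1)) x with hb1x'
  set axx := deriv (deriv (u n)) x with haxx'
  set F : ℝ × ℝ × ℝ × ℝ → ℝ := fun p => B p.1 p.2.1 p.2.2.1 p.2.2.2 with hF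
  set L := fderiv ℝ F (a, b, a₁, b₁) with hL
  have hpS : ((a, b, a₁, b₁) : ℝ × ℝ × ℝ × ℝ) ∈
      {p : ℝ × ℝ × ℝ × ℝ | 0 < p.1 + p.2.1 + c ∧ 0 < p.2.2.1 + p.2.2.2 + c} := ⟨hD, hD1⟩
  have hFd : HasFDerivAt F L (a, b, a₁, b₁) :=
    ((hB.contDiffAt (hSopen.mem_nhds hpS)).differentiableAt (by simp)).hasFDerivAt
  -- partial derivatives
  have hBu : HasDerivAt (fun t => B t b a₁ b₁) (L (1, 0, 0, 0)) a := by
    have h : HasDerivAt (fun t : ℝ => ((t, b, a₁, b₁) : ℝ × ℝ × ℝ × ℝ))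
        ((1 : ℝ), (0 : ℝ), (0 : ℝ), (0 : ℝ)) a :=
      HasDerivAt.prodMk (hasDerivAt_id a) (HasDerivAt.prodMk (hasDerivAt_const a b)
        (HasDerivAt.prodMk (hasDerivAt_const a a₁) (hasDerivAt_const a b₁)))
    exact hFd.comp_hasDerivAt a h
  have hBb : HasDerivAt (fun t => B a t a₁ b₁) (L (0, 1, 0, 0)) b := by
    have h : HasDerivAt (fun t : ℝ => ((a, t, a₁, b₁) : ℝ × ℝ × ℝ × ℝ))
        ((0 : ℝ), (1 : ℝ), (0 : ℝ), (0 : ℝ)) b :=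
      HasDerivAt.prodMk (hasDerivAt_const b a) (HasDerivAt.prodMk (hasDerivAt_id b)
        (HasDerivAt.prodMk (hasDerivAt_const b a₁) (hasDerivAt_const b b₁)))
    exact hFd.comp_hasDerivAt b h
  have hBu1 : HasDerivAt (fun t => B a b t b₁) (L (0, 0, 1, 0)) a₁ := by
    have h : HasDerivAt (fun t : ℝ => ((a, b, t, b₁) : ℝ × ℝ × ℝ × ℝ))
        ((0 : ℝ), (0 : ℝ), (1 : ℝ), (0 : ℝ)) a₁ :=
      HasDerivAt.prodMk (hasDerivAt_const a₁ a) (HasDerivAt.prodMk (hasDerivAt_const a₁ b)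
        (HasDerivAt.prodMk (hasDerivAt_id a₁) (hasDerivAt_const a₁ b₁)))
    exact hFd.comp_hasDerivAt a₁ h
  have hBv1 : HasDerivAt (fun t => B a b a₁ t) (L (0, 0, 0, 1)) b₁ := by
    have h : HasDerivAt (fun t : ℝ => ((a, b, a₁, t) : ℝ × ℝ × ℝ × ℝ))
        ((0 : ℝ), (0 : ℝ), (0 : ℝ), (1 : ℝ)) b₁ :=
      HasDerivAt.prodMk (hasDerivAt_const b₁ a) (HasDerivAt.prodMk (hasDerivAt_const b₁ b)
        (HasDerivAt.prodMk (hasDerivAt_const b₁ a₁) (hasDerivAt_id b₁)))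
    exact hFd.comp_hasDerivAt b₁ h
  rw [hBu.deriv, hBu1.deriv, hBv1.deriv] at e1
  rw [hBb.deriv, hBv1.deriv] at e2
  -- derivatives of solution components
  have hda : HasDerivAt (u n) ax x := ((hu n).differentiable (by simp) x).hasDerivAt
  have hdb : HasDerivAt (v n) bx x := ((hv n).differentiable (by simp) x).hasDerivAt
  have hda1 : HasDerivAt (u (n + 1)) a1x x := ((hu (n + 1)).differentiable (by simp) x).hasDerivAt
  have hdb1 : HasDerivAt (v (n + 1)) b1x x := ((hv (n + 1)).differentiable (by simp) x).hasDerivAt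
  have hdax : HasDerivAt (deriv (u n)) axx x := by
    have hUn : ContDiff ℝ ((⊤ : ℕ∞) : WithTop ℕ∞) (u n) := (hu n).of_le (by simp)
    exact ((contDiff_infty_iff_deriv.mp
      (contDiff_infty_iff_deriv.mp hUn).2).1 x).hasDerivAt
  have hgam : HasDerivAt (fun y => ((u n y, v n y, u (n + 1) y, v (n + 1) y) : ℝ × ℝ × ℝ × ℝ))
      (ax, bx, a1x, b1x) x := hda.prodMk (hdb.prodMk (hda1.prodMk hdb1))
  have hBf : HasDerivAt (fun y => B (u n y) (v n y) (u (n + 1) y) (v (n + 1) y))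
      (L (ax, bx, a1x, b1x)) x := by exact hFd.comp_hasDerivAt x hgam
  have hLlin : L (ax, bx, a1x, b1x)
      = ax * L (1, 0, 0, 0) + bx * L (0, 1, 0, 0) + a1x * L (0, 0, 1, 0) + b1x * L (0, 0, 0, 1) := by
    have hsum : ((ax, bx, a1x, b1x) : ℝ × ℝ × ℝ × ℝ)
        = ax • ((1 : ℝ), (0 : ℝ), (0 : ℝ), (0 : ℝ)) + bx • (0, 1, 0, 0)
          + a1x • (0, 0, 1, 0) + b1x • (0, 0, 0, 1) := by
      simp [Prod.ext_iff]
    rw [hsum, map_add, map_add, map_add, map_smul, map_smul, map_smul, map_smul]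
    simp only [smul_eq_mul]
  have key : L (ax, bx, a1x, b1x) = B a b a₁ b₁ * (B a b a₁ b₁ - 1) * ax / (a + b + c) := by
    rw [hLlin, hu1x, hv1x]
    have h1 : a + b + c ≠ 0 := ne_of_gt hD
    have h2 : B a b a₁ b₁ ≠ 0 := ne_of_gt hBv
    field_simp at e1 e2 ⊢
    have e1' : L (1, 0, 0, 0) * (a + b + c) + (a₁ + b₁ + c) * B a b a₁ b₁ * L (0, 0, 1, 0)
        + 2 * (b₁ - b + c * Real.log (B a b a₁ b₁)) * B a b a₁ b₁ * L (0, 0, 0, 1)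
        + (1 - B a b a₁ b₁) * B a b a₁ b₁ = 0 := by
      have h : (a + b + c) ^ 2 * (L (1, 0, 0, 0) * (a + b + c)
          + (a₁ + b₁ + c) * B a b a₁ b₁ * L (0, 0, 1, 0)
          + 2 * (b₁ - b + c * Real.log (B a b a₁ b₁)) * B a b a₁ b₁ * L (0, 0, 0, 1)
          + (1 - B a b a₁ b₁) * B a b a₁ b₁) = 0 := by linear_combination (a + b + c) ^ 2 * e1
      rcases mul_eq_zero.mp h with h' | h'
      · exact absurd h' (pow_ne_zero 2 h1)
      · exact h'
    linear_combination ax * e1' + bx * (a + b + c) * e2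
  have hD' := ne_of_gt hD
  have hD1' := ne_of_gt hD1
  have haxne := ne_of_gt hax
  have hB' := ne_of_gt hBv
  constructor
  · -- first n-integral
    rw [hu1x, hv1x]
    have hlog : Real.log ((a₁ + b₁ + c) * B a b a₁ b₁ * ax / (a + b + c) / (a₁ + b₁ + c))
        = Real.log (B a b a₁ b₁) + Real.log (ax / (a + b + c)) := by
      rw [show (a₁ + b₁ + c) * B a b a₁ b₁ * ax / (a + b + c) / (a₁ + b₁ + c)
          = B a b a₁ b₁ * (ax / (a + b + c)) from by field_simp]
      exact Real.log_mul hB' (ne_of_gt (div_pos hax hD))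
    rw [hlog]
    field_simp
    ring
  · -- second n-integral
    have hfun : deriv (u (n + 1)) = fun y =>
        (u (n + 1) y + v (n + 1) y + c) * B (u n y) (v n y) (u (n + 1) y) (v (n + 1) y)
          * deriv (u n) y / (u n y + v n y + c) := funext fun y => hsysu n y
    have hden : HasDerivAt (fun y => u n y + v n y + c) (ax + bx) x := (hda.add hdb).add_const c
    have hR := ((((hda1.add hdb1).add_const c).mul hBf).mul hdax).div hden hD'
    have hE : deriv (deriv (u (n + 1))) x =
        ((((a1x + b1x) * B a b a₁ b₁ + (a₁ + b₁ + c) * L (ax, bx, a1x, b1x)) * ax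
            + (a₁ + b₁ + c) * B a b a₁ b₁ * axx) * (a + b + c)
          - (a₁ + b₁ + c) * B a b a₁ b₁ * ax * (ax + bx)) / (a + b + c) ^ 2 := by
      rw [hfun]; exact hR.deriv
    rw [hE, key, hu1x, hv1x]
    field_simp
    ring
end

section
/- Let c be a real constant. The function K_1(u_1^*, v_1^*, B^*) = v_1^*/(B^*-1)² + c·ln B^*/(B^*-1)² - c·ln B^* + c·ln(B^*-1) + c/(B^*-1), defined for B^* > 1, is a first integral of the characteristic vector field: (u_1^*+v_1^*)·∂K_1/∂u_1^* + (2v_1^* + 2c·ln B^*)·∂K_1/∂v_1^* + (B^*-1)·∂K_1/∂B^* = 0 at every point with B^* > 1. -/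
/-- The function `K₁` from the proof of Theorem 1.2 (the first argument `u₁*` is a dummy
variable on which `K₁` does not depend). -/
noncomputable def K1 (c u₁ v₁ B : ℝ) : ℝ :=
  v₁ / (B - 1) ^ 2 + c * Real.log B / (B - 1) ^ 2 - c * Real.log B
    + c * Real.log (B - 1) + c / (B - 1)

/-! Along the field, `v₁* + c ln B*` grows like `(B* - 1)²`, so `(v₁* + c ln B*)/(B* - 1)²` is
nearly conserved: the only defect is the `B*`-derivative `c / (B*(B* - 1)²)` of its `ln B*`, and
the remaining terms `-c ln B* + c ln(B* - 1) + c/(B* - 1)` of `K₁` have derivative exactly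
`-c / (B*(B* - 1)²)`. Hence `∂K₁/∂B* = -2(v₁* + c ln B*)/(B* - 1)³`, while `∂K₁/∂v₁* = 1/(B* - 1)²`
and `∂K₁/∂u₁* = 0`. -/

open Real

lemma K1_hasDerivAt_fst (c u₁ v₁ B : ℝ) : HasDerivAt (fun t => K1 c t v₁ B) 0 u₁ :=
  hasDerivAt_const u₁ _

lemma K1_hasDerivAt_snd (c u₁ v₁ B : ℝ) :
    HasDerivAt (fun t => K1 c u₁ t B) (1 / (B - 1) ^ 2) v₁ := by
  have hK : (fun t => K1 c u₁ t B) = fun t =>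
      t / (B - 1) ^ 2 + (c * log B / (B - 1) ^ 2 - c * log B + c * log (B - 1) + c / (B - 1)) := by
    funext t
    unfold K1
    ring
  rw [hK]
  exact ((hasDerivAt_id' v₁).div_const _).add_const _

lemma K1_hasDerivAt_thd (c u₁ v₁ : ℝ) {B : ℝ} (hB₀ : B ≠ 0) (hB₁ : B ≠ 1) :
    HasDerivAt (fun t => K1 c u₁ v₁ t) (-2 * (v₁ + c * log B) / (B - 1) ^ 3) B := by
  have hB₁' : B - 1 ≠ 0 := sub_ne_zero.mpr hB₁
  have hsub : HasDerivAt (fun t : ℝ => t - 1) 1 B := (hasDerivAt_id B).sub_const 1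
  have hsq : HasDerivAt (fun t : ℝ => (t - 1) ^ 2) (2 * (B - 1)) B := by
    simpa using hsub.fun_pow 2
  have hlog := (hasDerivAt_log hB₀).const_mul c
  have hquot := ((hasDerivAt_const B v₁).fun_add hlog).fun_div hsq (pow_ne_zero 2 hB₁')
  have hrest := (hlog.fun_neg.fun_add ((hsub.log hB₁').const_mul c)).fun_add
    ((hasDerivAt_const B c).fun_div hsub hB₁')
  have hK : (fun t => K1 c u₁ v₁ t) = fun t =>
      (v₁ + c * log t) / (t - 1) ^ 2 + (-(c * log t) + c * log (t - 1) + c / (t - 1)) := by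
    funext t
    unfold K1
    ring
  rw [hK]
  refine (hquot.fun_add hrest).congr_deriv ?_
  field_simp
  ring

/-- `K₁` is a first integral of the characteristic vector field
`(u₁*+v₁*)∂_{u₁*} + (2v₁* + 2c·ln B*)∂_{v₁*} + (B*-1)∂_{B*}` for `B* > 1`. -/
theorem K1_first_integral (c : ℝ) :
    ∀ u₁ v₁ B : ℝ, 1 < B →
      (u₁ + v₁) * deriv (fun t => K1 c t v₁ B) u₁
        + (2 * v₁ + 2 * c * Real.log B) * deriv (fun t => K1 c u₁ t B) v₁
        + (B - 1) * deriv (fun t => K1 c u₁ v₁ t) B = 0 := by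
  intro u₁ v₁ B hB
  have hB₁ : B - 1 ≠ 0 := by linarith
  rw [(K1_hasDerivAt_fst c u₁ v₁ B).deriv, (K1_hasDerivAt_snd c u₁ v₁ B).deriv,
    (K1_hasDerivAt_thd c u₁ v₁ (by linarith) hB.ne').deriv]
  field_simp
  ring
end

section
/- Let c be a real constant. The function K_2(u_1^*, v_1^*, B^*) = (u_1^* - c - c·ln B^*)/(B^*-1) - B^* v_1^*/(B^*-1)² - c B^* ln B^*/(B^*-1)² + c·ln(B^*-1) - c·ln B^*, defined for B^* > 1, is a first integral of the characteristic vector field: (u_1^*+v_1^*)·∂K_2/∂u_1^* + (2v_1^* + 2c·ln B^*)·∂K_2/∂v_1^* + (B^*-1)·∂K_2/∂B^* = 0 at every point with B^* > 1. -/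
/-- The function `K₂` from the proof of Theorem 1.2. -/
noncomputable def K2 (c u₁ v₁ B : ℝ) : ℝ :=
  (u₁ - c - c * Real.log B) / (B - 1) - B * v₁ / (B - 1) ^ 2
    - c * B * Real.log B / (B - 1) ^ 2 + c * Real.log (B - 1) - c * Real.log B

/-! With `w = v₁ + c ln B`, the three partial derivatives of `K₂` are `1/(B-1)`, `-B/(B-1)²` and
`(w (B+1)/(B-1) - (u₁ - c ln B)) / (B-1)²`, so the field contracts to
`(u₁ + v₁)/(B-1) - 2Bw/(B-1)² + w(B+1)/(B-1)² - (u₁ - c ln B)/(B-1) = w/(B-1) - w/(B-1) = 0`. -/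

open Real

theorem hasDerivAt_K2_u (c v B u : ℝ) :
    HasDerivAt (fun t => K2 c t v B) (1 / (B - 1)) u :=
  ((((((hasDerivAt_id u).sub_const c).sub_const (c * log B)).div_const (B - 1)).sub_const
    (B * v / (B - 1) ^ 2)).sub_const (c * B * log B / (B - 1) ^ 2)).add_const
    (c * log (B - 1)) |>.sub_const (c * log B)

theorem hasDerivAt_K2_v (c u B v : ℝ) :
    HasDerivAt (fun t => K2 c u t B) (-(B / (B - 1) ^ 2)) v :=
  (((((hasDerivAt_id v).const_mul B).div_const ((B - 1) ^ 2)).const_sub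
    ((u - c - c * log B) / (B - 1))).sub_const (c * B * log B / (B - 1) ^ 2)).add_const
    (c * log (B - 1)) |>.sub_const (c * log B) |>.congr_deriv (by ring)

theorem hasDerivAt_K2_B (c u v : ℝ) {B : ℝ} (hB₀ : B ≠ 0) (hB₁ : B - 1 ≠ 0) :
    HasDerivAt (fun t => K2 c u v t)
      (((v + c * log B) * (B + 1) / (B - 1) - (u - c * log B)) / (B - 1) ^ 2) B := by
  have hlog := hasDerivAt_log hB₀
  have hsub : HasDerivAt (fun t : ℝ => t - 1) 1 B := (hasDerivAt_id' B).sub_const 1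
  have hsq := hsub.fun_pow 2
  have h := (((((hlog.const_mul c).const_sub (u - c)).fun_div hsub hB₁).fun_sub
    (((hasDerivAt_id' B).mul_const v).fun_div hsq (pow_ne_zero 2 hB₁))).fun_sub
    ((((hasDerivAt_id' B).const_mul c).fun_mul hlog).fun_div hsq (pow_ne_zero 2 hB₁))).fun_add
    ((hsub.log hB₁).const_mul c) |>.fun_sub (hlog.const_mul c)
  refine h.congr_deriv ?_
  field_simp
  ring

/-- `K₂` is a first integral of the characteristic vector field
`(u₁*+v₁*)∂_{u₁*} + (2v₁* + 2c·ln B*)∂_{v₁*} + (B*-1)∂_{B*}` for `B* > 1`. -/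
theorem K2_first_integral (c : ℝ) :
    ∀ u₁ v₁ B : ℝ, 1 < B →
      (u₁ + v₁) * deriv (fun t => K2 c t v₁ B) u₁
        + (2 * v₁ + 2 * c * Real.log B) * deriv (fun t => K2 c u₁ t B) v₁
        + (B - 1) * deriv (fun t => K2 c u₁ v₁ t) B = 0 := by
  intro u₁ v₁ B hB
  have hB₀ : B ≠ 0 := by positivity
  have hB₁ : B - 1 ≠ 0 := sub_ne_zero.2 hB.ne'
  rw [(hasDerivAt_K2_u c v₁ B u₁).deriv, (hasDerivAt_K2_v c u₁ B v₁).deriv,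
    (hasDerivAt_K2_B c u₁ v₁ hB₀ hB₁).deriv]
  field_simp
  ring
end

section
/- Let A and B be real constants. For every solution u, v : ℤ × ℝ → ℝ of the semi-discrete system u_{1x} = u_x + A·e^{u_1+u-v_1}, v_{1x} = v_x + B·e^{-u+v+v_1}, both I_1 = u_{xx} + v_{xx} - u_x² + u_x v_x - v_x² and I_1^* = u_{xxx} + u_x(v_{xx} - 2u_{xx}) + u_x² v_x - u_x v_x² are n-integrals: each, evaluated at level n+1 (with u, v replaced by u_1, v_1 and their x-derivatives), equals its value at level n, for all n and x. -/
/-- Theorem 1.3, part (1), system (1.15): for every solution of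
`u₁ₓ = uₓ + A·e^{u₁+u-v₁}`, `v₁ₓ = vₓ + B·e^{-u+v+v₁}`, both
`I₁ = uₓₓ + vₓₓ - uₓ² + uₓvₓ - vₓ²` and
`I₁* = uₓₓₓ + uₓ(vₓₓ - 2uₓₓ) + uₓ²vₓ - uₓvₓ²` are `n`-integrals. -/
theorem n_integrals_of_exponential_system_1_15 (A B : ℝ) (u v : ℤ → ℝ → ℝ)
    (hu : ∀ n, ContDiff ℝ (⊤ : ℕ∞) (u n)) (hv : ∀ n, ContDiff ℝ (⊤ : ℕ∞) (v n))
    (hsysu : ∀ n x, deriv (u (n + 1)) x =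
      deriv (u n) x + A * Real.exp (u (n + 1) x + u n x - v (n + 1) x))
    (hsysv : ∀ n x, deriv (v (n + 1)) x =
      deriv (v n) x + B * Real.exp (-u n x + v n x + v (n + 1) x)) :
    ∀ n x,
      (deriv (deriv (u (n + 1))) x + deriv (deriv (v (n + 1))) x
          - (deriv (u (n + 1)) x) ^ 2 + deriv (u (n + 1)) x * deriv (v (n + 1)) x
          - (deriv (v (n + 1)) x) ^ 2
        = deriv (deriv (u n)) x + deriv (deriv (v n)) x
          - (deriv (u n) x) ^ 2 + deriv (u n) x * deriv (v n) x - (deriv (v n) x) ^ 2) ∧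
      (deriv (deriv (deriv (u (n + 1)))) x
          + deriv (u (n + 1)) x * (deriv (deriv (v (n + 1))) x - 2 * deriv (deriv (u (n + 1))) x)
          + (deriv (u (n + 1)) x) ^ 2 * deriv (v (n + 1)) x
          - deriv (u (n + 1)) x * (deriv (v (n + 1)) x) ^ 2
        = deriv (deriv (deriv (u n))) x
          + deriv (u n) x * (deriv (deriv (v n)) x - 2 * deriv (deriv (u n)) x)
          + (deriv (u n) x) ^ 2 * deriv (v n) x
          - deriv (u n) x * (deriv (v n) x) ^ 2) := by
  intro n x
  have hu' : ∀ n, ContDiff ℝ ((⊤ : ℕ∞) : WithTop ℕ∞) (u n) := fun n => (hu n).of_le (by simp)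
  have hv' : ∀ n, ContDiff ℝ ((⊤ : ℕ∞) : WithTop ℕ∞) (v n) := fun n => (hv n).of_le (by simp)
  have sd : ∀ (f : ℝ → ℝ), ContDiff ℝ ((⊤ : ℕ∞) : WithTop ℕ∞) f → ContDiff ℝ ((⊤ : ℕ∞) : WithTop ℕ∞) (deriv f) :=
    fun f h => (contDiff_infty_iff_deriv.mp h).2
  set E : ℝ → ℝ := fun y => A * Real.exp (u (n + 1) y + u n y - v (n + 1) y) with hEdef
  set F : ℝ → ℝ := fun y => B * Real.exp (-u n y + v n y + v (n + 1) y) with hFdef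
  have hE : ∀ y, HasDerivAt E
      (E y * (deriv (u (n + 1)) y + deriv (u n) y - deriv (v (n + 1)) y)) y := by
    intro y
    have h1 : HasDerivAt (fun z => u (n + 1) z + u n z - v (n + 1) z)
        (deriv (u (n + 1)) y + deriv (u n) y - deriv (v (n + 1)) y) y :=
      ((((hu' (n + 1)).differentiable (by simp) y).hasDerivAt.add
        (((hu' n).differentiable (by simp) y).hasDerivAt)).sub
        (((hv' (n + 1)).differentiable (by simp) y).hasDerivAt))
    have h2 := h1.exp.const_mul A
    rw [hEdef]
    refine h2.congr_deriv ?_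
    simp only []
    ring
  have hF : ∀ y, HasDerivAt F
      (F y * (-deriv (u n) y + deriv (v n) y + deriv (v (n + 1)) y)) y := by
    intro y
    have h1 : HasDerivAt (fun z => -u n z + v n z + v (n + 1) z)
        (-deriv (u n) y + deriv (v n) y + deriv (v (n + 1)) y) y :=
      (((((hu' n).differentiable (by simp) y).hasDerivAt.neg).add
        (((hv' n).differentiable (by simp) y).hasDerivAt)).add
        (((hv' (n + 1)).differentiable (by simp) y).hasDerivAt))
    have h2 := h1.exp.const_mul B
    rw [hFdef]
    refine h2.congr_deriv ?_
    simp only []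
    ring
  -- first derivatives as functions
  have hdu1 : deriv (u (n + 1)) = fun y => deriv (u n) y + E y := funext fun y => hsysu n y
  have hdv1 : deriv (v (n + 1)) = fun y => deriv (v n) y + F y := funext fun y => hsysv n y
  -- second derivatives as functions
  have hddu1 : deriv (deriv (u (n + 1))) = fun y => deriv (deriv (u n)) y
      + E y * (deriv (u (n + 1)) y + deriv (u n) y - deriv (v (n + 1)) y) := by
    funext y
    rw [hdu1, deriv_fun_add ((sd _ (hu' n)).differentiable (by simp) y)
      (hE y).differentiableAt, (hE y).deriv]
    simp only [hdu1]
  have hddv1 : deriv (deriv (v (n + 1))) = fun y => deriv (deriv (v n)) y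
      + F y * (-deriv (u n) y + deriv (v n) y + deriv (v (n + 1)) y) := by
    funext y
    rw [hdv1, deriv_fun_add ((sd _ (hv' n)).differentiable (by simp) y)
      (hF y).differentiableAt, (hF y).deriv]
    simp only [hdv1]
  -- third derivative of u at x
  have hG : HasDerivAt (fun y => deriv (u (n + 1)) y + deriv (u n) y - deriv (v (n + 1)) y)
      (deriv (deriv (u (n + 1))) x + deriv (deriv (u n)) x - deriv (deriv (v (n + 1))) x) x :=
    ((((sd _ (hu' (n + 1))).differentiable (by simp) x).hasDerivAt.add
      (((sd _ (hu' n)).differentiable (by simp) x).hasDerivAt)).sub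
      (((sd _ (hv' (n + 1))).differentiable (by simp) x).hasDerivAt))
  have h5 : deriv (deriv (deriv (u (n + 1)))) x = deriv (deriv (deriv (u n))) x
      + ((E x * (deriv (u (n + 1)) x + deriv (u n) x - deriv (v (n + 1)) x))
          * (deriv (u (n + 1)) x + deriv (u n) x - deriv (v (n + 1)) x)
        + E x * (deriv (deriv (u (n + 1))) x + deriv (deriv (u n)) x
            - deriv (deriv (v (n + 1))) x)) := by
    rw [hddu1, deriv_fun_add ((sd _ (sd _ (hu' n))).differentiable (by simp) x)
      ((hE x).fun_mul hG).differentiableAt, ((hE x).fun_mul hG).deriv]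
    simp only [hddu1]
  -- pointwise reduced identities
  have h1 : deriv (u (n + 1)) x = deriv (u n) x + E x := hsysu n x
  have h2 : deriv (v (n + 1)) x = deriv (v n) x + F x := hsysv n x
  have h3 : deriv (deriv (u (n + 1))) x = deriv (deriv (u n)) x
      + E x * (deriv (u (n + 1)) x + deriv (u n) x - deriv (v (n + 1)) x) := by
    rw [hddu1]
  have h4 : deriv (deriv (v (n + 1))) x = deriv (deriv (v n)) x
      + F x * (-deriv (u n) x + deriv (v n) x + deriv (v (n + 1)) x) := by
    rw [hddv1]
  refine ⟨by simp only [h3, h4, h1, h2]; ring, by simp only [h5, h3, h4, h1, h2]; ring⟩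
end

section
/- Let A and B be real constants. For every solution u, v : ℤ × ℝ → ℝ of the semi-discrete system u_{1x} = u_x + A·e^{u_1+u-v}, v_{1x} = v_x + B·e^{-u_1+v+v_1}, both I_1 = u_{xx} + v_{xx} - u_x² + u_x v_x - v_x² and I_1^* = u_{xxx} + u_x(v_{xx} - 2u_{xx}) + u_x² v_x - u_x v_x² are n-integrals: each, evaluated at level n+1 (with u, v replaced by u_1, v_1 and their x-derivatives), equals its value at level n, for all n and x. -/
/-- Theorem 1.3, part (1), system (1.16): for every solution of
`u₁ₓ = uₓ + A·e^{u₁+u-v}`, `v₁ₓ = vₓ + B·e^{-u₁+v+v₁}`, both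
`I₁ = uₓₓ + vₓₓ - uₓ² + uₓvₓ - vₓ²` and
`I₁* = uₓₓₓ + uₓ(vₓₓ - 2uₓₓ) + uₓ²vₓ - uₓvₓ²` are `n`-integrals. -/
theorem n_integrals_of_exponential_system_1_16 (A B : ℝ) (u v : ℤ → ℝ → ℝ)
    (hu : ∀ n, ContDiff ℝ (⊤ : ℕ∞) (u n)) (hv : ∀ n, ContDiff ℝ (⊤ : ℕ∞) (v n))
    (hsysu : ∀ n x, deriv (u (n + 1)) x =
      deriv (u n) x + A * Real.exp (u (n + 1) x + u n x - v n x))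
    (hsysv : ∀ n x, deriv (v (n + 1)) x =
      deriv (v n) x + B * Real.exp (-u (n + 1) x + v n x + v (n + 1) x)) :
    ∀ n x,
      (deriv (deriv (u (n + 1))) x + deriv (deriv (v (n + 1))) x
          - (deriv (u (n + 1)) x) ^ 2 + deriv (u (n + 1)) x * deriv (v (n + 1)) x
          - (deriv (v (n + 1)) x) ^ 2
        = deriv (deriv (u n)) x + deriv (deriv (v n)) x
          - (deriv (u n) x) ^ 2 + deriv (u n) x * deriv (v n) x - (deriv (v n) x) ^ 2) ∧
      (deriv (deriv (deriv (u (n + 1)))) x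
          + deriv (u (n + 1)) x * (deriv (deriv (v (n + 1))) x - 2 * deriv (deriv (u (n + 1))) x)
          + (deriv (u (n + 1)) x) ^ 2 * deriv (v (n + 1)) x
          - deriv (u (n + 1)) x * (deriv (v (n + 1)) x) ^ 2
        = deriv (deriv (deriv (u n))) x
          + deriv (u n) x * (deriv (deriv (v n)) x - 2 * deriv (deriv (u n)) x)
          + (deriv (u n) x) ^ 2 * deriv (v n) x
          - deriv (u n) x * (deriv (v n) x) ^ 2) := by
  -- differentiability facts
  have hle : ((⊤ : ℕ∞) : WithTop ℕ∞) ≠ 0 := by exact_mod_cast (by simp : (⊤ : ℕ∞) ≠ 0)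
  have hu' : ∀ m, ContDiff ℝ ((⊤ : ℕ∞) : WithTop ℕ∞) (u m) := fun m => (hu m).of_le (by simp)
  have hv' : ∀ m, ContDiff ℝ ((⊤ : ℕ∞) : WithTop ℕ∞) (v m) := fun m => (hv m).of_le (by simp)
  have hud : ∀ m, Differentiable ℝ (u m) := fun m => (hu' m).differentiable hle
  have hvd : ∀ m, Differentiable ℝ (v m) := fun m => (hv' m).differentiable hle
  have hud2 : ∀ m, Differentiable ℝ (deriv (u m)) := fun m =>
    ((contDiff_infty_iff_deriv.mp (hu' m)).2).differentiable hle
  have hvd2 : ∀ m, Differentiable ℝ (deriv (v m)) := fun m =>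
    ((contDiff_infty_iff_deriv.mp (hv' m)).2).differentiable hle
  have hud3 : ∀ m, Differentiable ℝ (deriv (deriv (u m))) := fun m =>
    ((contDiff_infty_iff_deriv.mp (contDiff_infty_iff_deriv.mp (hu' m)).2).2).differentiable hle
  intro n x
  -- second derivative of u (n+1)
  have hExp : ∀ y : ℝ, HasDerivAt (fun z => A * Real.exp (u (n + 1) z + u n z - v n z))
      (A * (Real.exp (u (n + 1) y + u n y - v n y) *
        (deriv (u (n + 1)) y + deriv (u n) y - deriv (v n) y))) y := by
    intro y
    exact ((((hud (n + 1) y).hasDerivAt.add (hud n y).hasDerivAt).sub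
      (hvd n y).hasDerivAt).exp).const_mul A
  have huxx : ∀ y : ℝ, deriv (deriv (u (n + 1))) y = deriv (deriv (u n)) y +
      A * Real.exp (u (n + 1) y + u n y - v n y) *
        (deriv (u (n + 1)) y + deriv (u n) y - deriv (v n) y) := by
    intro y
    have h1 : deriv (u (n + 1)) = fun z => deriv (u n) z +
        A * Real.exp (u (n + 1) z + u n z - v n z) := funext (hsysu n)
    conv_lhs => rw [h1]
    rw [show deriv (fun z => deriv (u n) z + A * Real.exp (u (n + 1) z + u n z - v n z)) y = _ from
      ((hud2 n y).hasDerivAt.add (hExp y)).deriv]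
    ring
  -- second derivative of v (n+1)
  have hExpV : ∀ y : ℝ, HasDerivAt (fun z => B * Real.exp (-u (n + 1) z + v n z + v (n + 1) z))
      (B * (Real.exp (-u (n + 1) y + v n y + v (n + 1) y) *
        (-deriv (u (n + 1)) y + deriv (v n) y + deriv (v (n + 1)) y))) y := by
    intro y
    exact ((((hud (n + 1) y).hasDerivAt.neg.add (hvd n y).hasDerivAt).add
      (hvd (n + 1) y).hasDerivAt).exp).const_mul B
  have hvxx : ∀ y : ℝ, deriv (deriv (v (n + 1))) y = deriv (deriv (v n)) y +
      B * Real.exp (-u (n + 1) y + v n y + v (n + 1) y) *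
        (-deriv (u (n + 1)) y + deriv (v n) y + deriv (v (n + 1)) y) := by
    intro y
    have h1 : deriv (v (n + 1)) = fun z => deriv (v n) z +
        B * Real.exp (-u (n + 1) z + v n z + v (n + 1) z) := funext (hsysv n)
    conv_lhs => rw [h1]
    rw [show deriv (fun z => deriv (v n) z + B * Real.exp (-u (n + 1) z + v n z + v (n + 1) z)) y = _ from
      ((hvd2 n y).hasDerivAt.add (hExpV y)).deriv]
    ring
  -- third derivative of u (n+1)
  have huxxx : deriv (deriv (deriv (u (n + 1)))) x = deriv (deriv (deriv (u n))) x +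
      (A * (Real.exp (u (n + 1) x + u n x - v n x) *
          (deriv (u (n + 1)) x + deriv (u n) x - deriv (v n) x)) *
        (deriv (u (n + 1)) x + deriv (u n) x - deriv (v n) x) +
       A * Real.exp (u (n + 1) x + u n x - v n x) *
        (deriv (deriv (u (n + 1))) x + deriv (deriv (u n)) x - deriv (deriv (v n)) x)) := by
    have h1 : deriv (deriv (u (n + 1))) = fun z => deriv (deriv (u n)) z +
        A * Real.exp (u (n + 1) z + u n z - v n z) *
          (deriv (u (n + 1)) z + deriv (u n) z - deriv (v n) z) := funext huxx
    have hg : HasDerivAt (fun z => deriv (u (n + 1)) z + deriv (u n) z - deriv (v n) z)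
        (deriv (deriv (u (n + 1))) x + deriv (deriv (u n)) x - deriv (deriv (v n)) x) x :=
      ((hud2 (n + 1) x).hasDerivAt.add (hud2 n x).hasDerivAt).sub (hvd2 n x).hasDerivAt
    conv_lhs => rw [h1]
    rw [show deriv (fun z => deriv (deriv (u n)) z +
        A * Real.exp (u (n + 1) z + u n z - v n z) *
          (deriv (u (n + 1)) z + deriv (u n) z - deriv (v n) z)) x = _ from
      ((hud3 n x).hasDerivAt.add ((hExp x).mul hg)).deriv]
  constructor
  · rw [huxx x, hvxx x, hsysu n x, hsysv n x]
    ring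
  · rw [huxxx, huxx x, hvxx x, hsysu n x, hsysv n x]
    ring
end

section
/- Let A and B be real constants. For every solution u, v : ℤ × ℝ → ℝ of the semi-discrete system u_{1x} = u_x + A·e^{u+u_1-v_1}, v_{1x} = v_x + B·e^{-2u+v+v_1}, both I_2 = 2u_{xx} + v_{xx} - 2u_x² + 2u_x v_x - v_x² and I_2^* = u_{xxxx} + u_x(v_{xxx} - 2u_{xxx}) + u_{xx}(4u_x v_x - 2u_x² - v_x²) + u_{xx}(v_{xx} - u_{xx}) + v_{xx} u_x(u_x - 2v_x) + u_x⁴ + u_x² v_x² - 2u_x³ v_x are n-integrals: each, evaluated at level n+1 (with u, v replaced by u_1, v_1 and their x-derivatives), equals its value at level n, for all n and x. -/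
open scoped ContDiff

private lemma smooth_deriv' {f : ℝ → ℝ} (h : ContDiff ℝ ∞ f) : ContDiff ℝ ∞ (deriv f) :=
  (contDiff_infty_iff_deriv.mp h).2

private lemma hd' {f : ℝ → ℝ} (h : ContDiff ℝ ∞ f) (y : ℝ) : HasDerivAt f (deriv f y) y :=
  (h.differentiable (by simp) y).hasDerivAt

/-- The `n`-integral `I₂ = 2uₓₓ + vₓₓ - 2uₓ² + 2uₓvₓ - vₓ²` evaluated on a pair of
functions of `x`. -/
noncomputable def integralI2 (w z : ℝ → ℝ) (x : ℝ) : ℝ :=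
  2 * deriv (deriv w) x + deriv (deriv z) x - 2 * (deriv w x) ^ 2
    + 2 * deriv w x * deriv z x - (deriv z x) ^ 2

/-- The `n`-integral `I₂* = uₓₓₓₓ + uₓ(vₓₓₓ - 2uₓₓₓ) + uₓₓ(4uₓvₓ - 2uₓ² - vₓ²)
+ uₓₓ(vₓₓ - uₓₓ) + vₓₓuₓ(uₓ - 2vₓ) + uₓ⁴ + uₓ²vₓ² - 2uₓ³vₓ` evaluated on a pair of
functions of `x`. -/
noncomputable def integralI2star (w z : ℝ → ℝ) (x : ℝ) : ℝ :=
  deriv (deriv (deriv (deriv w))) x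
    + deriv w x * (deriv (deriv (deriv z)) x - 2 * deriv (deriv (deriv w)) x)
    + deriv (deriv w) x * (4 * deriv w x * deriv z x - 2 * (deriv w x) ^ 2 - (deriv z x) ^ 2)
    + deriv (deriv w) x * (deriv (deriv z) x - deriv (deriv w) x)
    + deriv (deriv z) x * deriv w x * (deriv w x - 2 * deriv z x)
    + (deriv w x) ^ 4 + (deriv w x) ^ 2 * (deriv z x) ^ 2 - 2 * (deriv w x) ^ 3 * deriv z x

/-- Theorem 1.3, part (2), system (1.19): for every solution of
`u₁ₓ = uₓ + A·e^{u+u₁-v₁}`, `v₁ₓ = vₓ + B·e^{-2u+v+v₁}`, both `I₂` and `I₂*` are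
`n`-integrals. -/
theorem n_integrals_of_exponential_system_1_19 (A B : ℝ) (u v : ℤ → ℝ → ℝ)
    (hu : ∀ n, ContDiff ℝ (⊤ : ℕ∞) (u n)) (hv : ∀ n, ContDiff ℝ (⊤ : ℕ∞) (v n))
    (hsysu : ∀ n x, deriv (u (n + 1)) x =
      deriv (u n) x + A * Real.exp (u n x + u (n + 1) x - v (n + 1) x))
    (hsysv : ∀ n x, deriv (v (n + 1)) x =
      deriv (v n) x + B * Real.exp (-2 * u n x + v n x + v (n + 1) x)) :
    ∀ n x,
      integralI2 (u (n + 1)) (v (n + 1)) x = integralI2 (u n) (v n) x ∧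
      integralI2star (u (n + 1)) (v (n + 1)) x = integralI2star (u n) (v n) x := by
  intro n x
  -- smoothness of the basic functions
  have su : ContDiff ℝ ∞ (u n) := (hu n).of_le (by simp)
  have su1 : ContDiff ℝ ∞ (u (n + 1)) := (hu (n + 1)).of_le (by simp)
  have sv : ContDiff ℝ ∞ (v n) := (hv n).of_le (by simp)
  have sv1 : ContDiff ℝ ∞ (v (n + 1)) := (hv (n + 1)).of_le (by simp)
  set F : ℝ → ℝ := fun z => A * Real.exp (u n z + u (n + 1) z - v (n + 1) z) with hF0
  set G : ℝ → ℝ := fun z => B * Real.exp (-2 * u n z + v n z + v (n + 1) z) with hG0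
  have hFy : ∀ y, F y = A * Real.exp (u n y + u (n + 1) y - v (n + 1) y) := fun y => rfl
  have hGy : ∀ y, G y = B * Real.exp (-2 * u n y + v n y + v (n + 1) y) := fun y => rfl
  have sF : ContDiff ℝ ∞ F := by
    rw [hF0]; exact contDiff_const.mul (((su.add su1).sub sv1).exp)
  have sG : ContDiff ℝ ∞ G := by
    rw [hG0]
    exact contDiff_const.mul ((((contDiff_const.mul su).add sv).add sv1).exp)
  have s1 : ContDiff ℝ ∞ (deriv (u n)) := smooth_deriv' su
  have s2 : ContDiff ℝ ∞ (deriv (deriv (u n))) := smooth_deriv' s1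
  have s3 : ContDiff ℝ ∞ (deriv (deriv (deriv (u n)))) := smooth_deriv' s2
  have t1 : ContDiff ℝ ∞ (deriv (v n)) := smooth_deriv' sv
  have t2 : ContDiff ℝ ∞ (deriv (deriv (v n))) := smooth_deriv' t1
  have t3 : ContDiff ℝ ∞ (deriv (deriv (deriv (v n)))) := smooth_deriv' t2
  have sF1 : ContDiff ℝ ∞ (deriv F) := smooth_deriv' sF
  have sF2 : ContDiff ℝ ∞ (deriv (deriv F)) := smooth_deriv' sF1
  have sG1 : ContDiff ℝ ∞ (deriv G) := smooth_deriv' sG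
  have sG2 : ContDiff ℝ ∞ (deriv (deriv G)) := smooth_deriv' sG1
  -- first derivatives of F and G
  have hF1 : ∀ y, deriv F y
      = F y * (2 * deriv (u n) y + F y - deriv (v n) y - G y) := by
    intro y
    have h : HasDerivAt F
        (A * (Real.exp (u n y + u (n + 1) y - v (n + 1) y)
          * (deriv (u n) y + deriv (u (n + 1)) y - deriv (v (n + 1)) y))) y := by
      rw [hF0]
      exact ((((hd' su y).add (hd' su1 y)).sub (hd' sv1 y)).exp).const_mul A
    rw [h.deriv, hsysu n y, hsysv n y, hFy y, hGy y]; ring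
  have hG1 : ∀ y, deriv G y
      = G y * (-2 * deriv (u n) y + 2 * deriv (v n) y + G y) := by
    intro y
    have h : HasDerivAt G
        (B * (Real.exp (-2 * u n y + v n y + v (n + 1) y)
          * (-2 * deriv (u n) y + deriv (v n) y + deriv (v (n + 1)) y))) y := by
      rw [hG0]
      exact (((((hd' su y).const_mul (-2)).add (hd' sv y)).add (hd' sv1 y)).exp).const_mul B
    rw [h.deriv, hsysv n y, hGy y]; ring
  have hF1f : deriv F = fun y => F y * (2 * deriv (u n) y + F y - deriv (v n) y - G y) :=
    funext hF1
  have hG1f : deriv G = fun y => G y * (-2 * deriv (u n) y + 2 * deriv (v n) y + G y) :=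
    funext hG1
  -- second derivatives of F and G
  have hF2 : ∀ y, deriv (deriv F) y
      = deriv F y * (2 * deriv (u n) y + F y - deriv (v n) y - G y)
        + F y * (2 * deriv (deriv (u n)) y + deriv F y - deriv (deriv (v n)) y - deriv G y) := by
    intro y
    conv_lhs => rw [hF1f]
    exact ((hd' sF y).mul
      ((((hd' s1 y).const_mul 2).add (hd' sF y)).sub (hd' t1 y) |>.sub (hd' sG y))).deriv
  have hG2 : ∀ y, deriv (deriv G) y
      = deriv G y * (-2 * deriv (u n) y + 2 * deriv (v n) y + G y)
        + G y * (-2 * deriv (deriv (u n)) y + 2 * deriv (deriv (v n)) y + deriv G y) := by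
    intro y
    conv_lhs => rw [hG1f]
    exact ((hd' sG y).mul
      ((((hd' s1 y).const_mul (-2)).add ((hd' t1 y).const_mul 2)).add (hd' sG y))).deriv
  have hF2f : deriv (deriv F)
      = fun y => deriv F y * (2 * deriv (u n) y + F y - deriv (v n) y - G y)
        + F y * (2 * deriv (deriv (u n)) y + deriv F y - deriv (deriv (v n)) y - deriv G y) :=
    funext hF2
  have hG2f : deriv (deriv G)
      = fun y => deriv G y * (-2 * deriv (u n) y + 2 * deriv (v n) y + G y)
        + G y * (-2 * deriv (deriv (u n)) y + 2 * deriv (deriv (v n)) y + deriv G y) :=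
    funext hG2
  -- third derivatives of F and G
  have hF3 : ∀ y, deriv (deriv (deriv F)) y
      = (deriv (deriv F) y * (2 * deriv (u n) y + F y - deriv (v n) y - G y)
          + deriv F y * (2 * deriv (deriv (u n)) y + deriv F y - deriv (deriv (v n)) y
            - deriv G y))
        + (deriv F y * (2 * deriv (deriv (u n)) y + deriv F y - deriv (deriv (v n)) y
            - deriv G y)
          + F y * (2 * deriv (deriv (deriv (u n))) y + deriv (deriv F) y
            - deriv (deriv (deriv (v n))) y - deriv (deriv G) y)) := by
    intro y
    conv_lhs => rw [hF2f]
    exact (((hd' sF1 y).mul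
        ((((hd' s1 y).const_mul 2).add (hd' sF y)).sub (hd' t1 y) |>.sub (hd' sG y))).add
      ((hd' sF y).mul
        ((((hd' s2 y).const_mul 2).add (hd' sF1 y)).sub (hd' t2 y) |>.sub (hd' sG1 y)))).deriv
  have hG3 : ∀ y, deriv (deriv (deriv G)) y
      = (deriv (deriv G) y * (-2 * deriv (u n) y + 2 * deriv (v n) y + G y)
          + deriv G y * (-2 * deriv (deriv (u n)) y + 2 * deriv (deriv (v n)) y + deriv G y))
        + (deriv G y * (-2 * deriv (deriv (u n)) y + 2 * deriv (deriv (v n)) y + deriv G y)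
          + G y * (-2 * deriv (deriv (deriv (u n))) y + 2 * deriv (deriv (deriv (v n))) y
            + deriv (deriv G) y)) := by
    intro y
    conv_lhs => rw [hG2f]
    exact (((hd' sG1 y).mul
        ((((hd' s1 y).const_mul (-2)).add ((hd' t1 y).const_mul 2)).add (hd' sG y))).add
      ((hd' sG y).mul
        ((((hd' s2 y).const_mul (-2)).add ((hd' t2 y).const_mul 2)).add (hd' sG1 y)))).deriv
  -- derivatives at level n+1
  have k1u : ∀ y, deriv (u (n + 1)) y = deriv (u n) y + F y := fun y => hsysu n y
  have k1v : ∀ y, deriv (v (n + 1)) y = deriv (v n) y + G y := fun y => hsysv n y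
  have k1uf : deriv (u (n + 1)) = fun y => deriv (u n) y + F y := funext k1u
  have k1vf : deriv (v (n + 1)) = fun y => deriv (v n) y + G y := funext k1v
  have k2u : ∀ y, deriv (deriv (u (n + 1))) y = deriv (deriv (u n)) y + deriv F y := by
    intro y
    conv_lhs => rw [k1uf]
    exact ((hd' s1 y).add (hd' sF y)).deriv
  have k2v : ∀ y, deriv (deriv (v (n + 1))) y = deriv (deriv (v n)) y + deriv G y := by
    intro y
    conv_lhs => rw [k1vf]
    exact ((hd' t1 y).add (hd' sG y)).deriv
  have k2uf : deriv (deriv (u (n + 1))) = fun y => deriv (deriv (u n)) y + deriv F y :=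
    funext k2u
  have k2vf : deriv (deriv (v (n + 1))) = fun y => deriv (deriv (v n)) y + deriv G y :=
    funext k2v
  have k3u : ∀ y, deriv (deriv (deriv (u (n + 1)))) y
      = deriv (deriv (deriv (u n))) y + deriv (deriv F) y := by
    intro y
    conv_lhs => rw [k2uf]
    exact ((hd' s2 y).add (hd' sF1 y)).deriv
  have k3v : ∀ y, deriv (deriv (deriv (v (n + 1)))) y
      = deriv (deriv (deriv (v n))) y + deriv (deriv G) y := by
    intro y
    conv_lhs => rw [k2vf]
    exact ((hd' t2 y).add (hd' sG1 y)).deriv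
  have k3uf : deriv (deriv (deriv (u (n + 1))))
      = fun y => deriv (deriv (deriv (u n))) y + deriv (deriv F) y := funext k3u
  have k4u : ∀ y, deriv (deriv (deriv (deriv (u (n + 1))))) y
      = deriv (deriv (deriv (deriv (u n)))) y + deriv (deriv (deriv F)) y := by
    intro y
    conv_lhs => rw [k3uf]
    exact ((hd' s3 y).add (hd' sF2 y)).deriv
  constructor
  · simp only [integralI2]
    rw [k2u x, k2v x, k1u x, k1v x, hF1 x, hG1 x]
    ring
  · simp only [integralI2star]
    rw [k4u x, k3u x, k3v x, k2u x, k2v x, k1u x, k1v x, hF3 x, hF2 x, hG2 x,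
      hF1 x, hG1 x]
    ring
end

section
/- Let A and B be real constants. For every solution u, v : ℤ × ℝ → ℝ of the semi-discrete system u_{1x} = u_x + A·e^{u+u_1-v_1}, v_{1x} = v_x + B·e^{-3u+v+v_1}, the function I_3 = u_{xx} + (1/3)v_{xx} - u_x² + u_x v_x - (1/3)v_x² is an n-integral: I_3 evaluated at level n+1 (i.e., u_{1xx} + (1/3)v_{1xx} - u_{1x}² + u_{1x} v_{1x} - (1/3)v_{1x}²) equals I_3 evaluated at level n, for all n and x. -/
/-- Theorem 1.3, part (3), system (1.22), first `n`-integral: for every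
solution of `u₁ₓ = uₓ + A·e^{u+u₁-v₁}`, `v₁ₓ = vₓ + B·e^{-3u+v+v₁}`, the function
`I₃ = uₓₓ + (1/3)vₓₓ - uₓ² + uₓvₓ - (1/3)vₓ²` is an `n`-integral. -/
theorem n_integral_I3_of_exponential_system_1_22 (A B : ℝ) (u v : ℤ → ℝ → ℝ)
    (hu : ∀ n, ContDiff ℝ (⊤ : ℕ∞) (u n)) (hv : ∀ n, ContDiff ℝ (⊤ : ℕ∞) (v n))
    (hsysu : ∀ n x, deriv (u (n + 1)) x =
      deriv (u n) x + A * Real.exp (u n x + u (n + 1) x - v (n + 1) x))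
    (hsysv : ∀ n x, deriv (v (n + 1)) x =
      deriv (v n) x + B * Real.exp (-3 * u n x + v n x + v (n + 1) x)) :
    ∀ n x,
      deriv (deriv (u (n + 1))) x + (1 / 3) * deriv (deriv (v (n + 1))) x
          - (deriv (u (n + 1)) x) ^ 2 + deriv (u (n + 1)) x * deriv (v (n + 1)) x
          - (1 / 3) * (deriv (v (n + 1)) x) ^ 2
        = deriv (deriv (u n)) x + (1 / 3) * deriv (deriv (v n)) x
          - (deriv (u n) x) ^ 2 + deriv (u n) x * deriv (v n) x
          - (1 / 3) * (deriv (v n) x) ^ 2 := by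
  intro n x
  have hud : ∀ m, Differentiable ℝ (u m) := fun m => (hu m).differentiable (by simp)
  have hvd : ∀ m, Differentiable ℝ (v m) := fun m => (hv m).differentiable (by simp)
  have hud' : ∀ m, Differentiable ℝ (deriv (u m)) := fun m =>
    ((contDiff_infty_iff_deriv.mp ((hu m).of_le (by simp))).2).differentiable (by simp)
  have hvd' : ∀ m, Differentiable ℝ (deriv (v m)) := fun m =>
    ((contDiff_infty_iff_deriv.mp ((hv m).of_le (by simp))).2).differentiable (by simp)
  set a := deriv (u n) x
  set a1 := deriv (u (n + 1)) x
  set b := deriv (v n) x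
  set b1 := deriv (v (n + 1)) x
  set E := A * Real.exp (u n x + u (n + 1) x - v (n + 1) x) with hE
  set F := B * Real.exp (-3 * u n x + v n x + v (n + 1) x) with hF
  have hexpU : HasDerivAt (fun y => A * Real.exp (u n y + u (n + 1) y - v (n + 1) y))
      (E * (a + a1 - b1)) x := by
    have h := ((((hud n x).hasDerivAt.add (hud (n + 1) x).hasDerivAt).sub
      (hvd (n + 1) x).hasDerivAt).exp).const_mul A
    refine h.congr_deriv ?_
    rw [hE]; simp only [Pi.add_apply, Pi.sub_apply]; ring
  have hexpV : HasDerivAt (fun y => B * Real.exp (-3 * u n y + v n y + v (n + 1) y))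
      (F * (-3 * a + b + b1)) x := by
    have h := (((((hud n x).hasDerivAt.const_mul (-3 : ℝ)).add
      (hvd n x).hasDerivAt).add (hvd (n + 1) x).hasDerivAt).exp).const_mul B
    refine h.congr_deriv ?_
    rw [hF]; simp only [Pi.add_apply, Pi.sub_apply]; ring
  have hU : deriv (deriv (u (n + 1))) x = deriv (deriv (u n)) x + E * (a + a1 - b1) := by
    have h1 : deriv (u (n + 1)) = fun y =>
        deriv (u n) y + A * Real.exp (u n y + u (n + 1) y - v (n + 1) y) := by
      funext y; exact hsysu n y
    rw [h1]
    exact ((hud' n x).hasDerivAt.add hexpU).deriv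
  have hV : deriv (deriv (v (n + 1))) x = deriv (deriv (v n)) x + F * (-3 * a + b + b1) := by
    have h1 : deriv (v (n + 1)) = fun y =>
        deriv (v n) y + B * Real.exp (-3 * u n y + v n y + v (n + 1) y) := by
      funext y; exact hsysv n y
    rw [h1]
    exact ((hvd' n x).hasDerivAt.add hexpV).deriv
  have ha1 : a1 = a + E := hsysu n x
  have hb1 : b1 = b + F := hsysv n x
  rw [hU, hV, ha1, hb1]
  ring
end
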